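/- arXiv:1905.05418 — 3 statements merged into one kernel-verified Lean document; each statement's English description precedes it below -/
import Mathlib

section
/- Fix an integer δ > 2. There is no finite simple graph G = (V,E) satisfying all of the following conditions: (i) G is 2-connected; (ii) G∖e is 2-connected for every edge e; (iii) G/e is 2-connected for every edge e; (iv) |E| = δ(|V|−1); (v) |E(S)| + 1 = δ(|S|−1) for every good flat S ⊆ V with more than two vertices. -/
open SimpleGraph
open scoped Pointwise

namespace Gor

/-! ### Graph-theoretic notions -/

/-- A graph is `2`-connected if it is connected and remains connected after deletion of any
single vertex.  A single edge `K₂` counts as `2`-connected. -/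
def IsTwoConnected {V : Type*} (G : SimpleGraph V) : Prop :=
  G.Connected ∧ ∀ v : V, (G.induce {u : V | u ≠ v}).Connected

/-- `E(S)`: the set of edges of `G` with both endpoints in `S`. -/
def edgesIn {V : Type*} (G : SimpleGraph V) (S : Set V) : Set (Sym2 V) :=
  {e ∈ G.edgeSet | ∀ v ∈ e, v ∈ S}

/-- The simple graph obtained from `G` by contracting all edges in `F`: its vertices are the
connected components of the graph with edge set `F`, two being adjacent if some edge of `G`
joins them. -/
def contractEdges {V : Type*} (G : SimpleGraph V) (F : Set (Sym2 V)) :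
    SimpleGraph (SimpleGraph.fromEdgeSet F).ConnectedComponent :=
  SimpleGraph.fromRel fun c d => ∃ u v : V, G.Adj u v ∧
    (SimpleGraph.fromEdgeSet F).connectedComponentMk u = c ∧
    (SimpleGraph.fromEdgeSet F).connectedComponentMk v = d

/-- `S` is a good flat of `G`: the induced subgraph `G[S]` is `2`-connected and the contraction
of all edges of `E(S)` in `G` is `2`-connected. -/
def IsGoodFlat {V : Type*} (G : SimpleGraph V) (S : Set V) : Prop :=
  IsTwoConnected (G.induce S) ∧ IsTwoConnected (contractEdges G (edgesIn G S))

/-- The weight function `w : E → {1, δ-1}` with `w e = 1` whenever `G∖e` is `2`-connected and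
`w e = δ - 1` whenever `G/e` is `2`-connected. -/
def IsCanonicalWeight {V : Type*} (G : SimpleGraph V) (δ : ℕ) (w : Sym2 V → ℕ) : Prop :=
  (∀ e ∈ G.edgeSet, w e = 1 ∨ w e = δ - 1) ∧
  (∀ e ∈ G.edgeSet, IsTwoConnected (G.deleteEdges {e}) → w e = 1) ∧
  (∀ e ∈ G.edgeSet, IsTwoConnected (contractEdges G {e}) → w e = δ - 1)

/-- A `2`-connected graph `G` satisfies `(♠)_δ` via the weight function `w`. -/
def SatisfiesSpade {V : Type*} (G : SimpleGraph V) (δ : ℕ) (w : Sym2 V → ℕ) : Prop :=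
  IsTwoConnected G ∧ IsCanonicalWeight G δ w ∧
  (∑ᶠ e ∈ G.edgeSet, w e) = δ * (Nat.card V - 1) ∧
  ∀ S : Set V, IsGoodFlat G S → (∑ᶠ e ∈ edgesIn G S, w e) + 1 = δ * (S.ncard - 1)

/-- The number of `2`-connected components (blocks) of a graph: the number of inclusion-maximal
vertex subsets inducing a `2`-connected subgraph. -/
noncomputable def numBlocks {V : Type*} (G : SimpleGraph V) : ℕ :=
  {S : Set V | IsTwoConnected (G.induce S) ∧
    ∀ T : Set V, S ⊆ T → IsTwoConnected (G.induce T) → S = T}.ncard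

/-! ### Lattice polytopes and the Gorenstein property -/

/-- A point of `ℝ^η` is a lattice point if all its coordinates are integers. -/
def IsLatticePoint {η : Type*} (x : η → ℝ) : Prop := ∀ i, ∃ z : ℤ, x i = z

/-- The cone over a polytope `P ⊆ ℝ^η`, living in `ℝ^η × ℝ`. -/
def coneOver {η : Type*} (P : Set (η → ℝ)) : Set ((η → ℝ) × ℝ) :=
  {y | ∃ t : ℝ, ∃ p ∈ P, 0 ≤ t ∧ y = (t • p, t)}

/-- The lattice affinely spanned by the lattice points of `P`, placed at height one;
i.e. the subgroup of `ℝ^η × ℝ` generated by `{(p, 1) : p a lattice point of P}`. -/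
def coneLattice {η : Type*} (P : Set (η → ℝ)) : Submodule ℤ ((η → ℝ) × ℝ) :=
  Submodule.span ℤ {y | ∃ p ∈ P, IsLatticePoint p ∧ y = (p, 1)}

/-- `h` is a linear form cutting out a facet-supporting hyperplane of the cone over `P`:
it is nonnegative on the cone and vanishes on a subset of the cone spanning one dimension less
than the cone itself. -/
def IsFacetForm {η : Type*} (P : Set (η → ℝ)) (h : ((η → ℝ) × ℝ) →ₗ[ℝ] ℝ) : Prop :=
  (∀ y ∈ coneOver P, 0 ≤ h y) ∧
  Module.finrank ℝ (Submodule.span ℝ {y ∈ coneOver P | h y = 0}) + 1 =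
    Module.finrank ℝ (Submodule.span ℝ (coneOver P))

/-- `h` is reduced with respect to the lattice spanned by `P`: it takes integer values on the
lattice and attains the value `1` there. -/
def IsReducedForm {η : Type*} (P : Set (η → ℝ)) (h : ((η → ℝ) × ℝ) →ₗ[ℝ] ℝ) : Prop :=
  (∀ y ∈ coneLattice P, ∃ z : ℤ, h y = z) ∧ ∃ y ∈ coneLattice P, h y = 1

/-- A polytope `P`, regarded as full-dimensional in the affine lattice it spans, is
`δ`-Gorenstein if there is a lattice point `v ∈ δP` with `h (v, δ) = 1` for the reduced
equation `h` of every facet-supporting hyperplane of the cone over `P`. -/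
def IsDeltaGorenstein {η : Type*} (P : Set (η → ℝ)) (δ : ℕ) : Prop :=
  ∃ v : η → ℝ, v ∈ (δ : ℝ) • P ∧ (v, (δ : ℝ)) ∈ coneLattice P ∧
    ∀ h : ((η → ℝ) × ℝ) →ₗ[ℝ] ℝ, IsFacetForm P h → IsReducedForm P h → h (v, (δ : ℝ)) = 1

/-- A polytope is Gorenstein if it is `δ`-Gorenstein for some positive integer `δ`. -/
def IsGorenstein {η : Type*} (P : Set (η → ℝ)) : Prop :=
  ∃ δ : ℕ, 0 < δ ∧ IsDeltaGorenstein P δ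

/-! ### Graphic matroids of simple graphs and their polytopes -/

/-- An independent set of the graphic matroid of `G`: a set of edges forming a forest. -/
def IsGraphicIndep {V : Type*} (G : SimpleGraph V) (I : Set (Sym2 V)) : Prop :=
  I ⊆ G.edgeSet ∧ (SimpleGraph.fromEdgeSet I).IsAcyclic

/-- A basis of the graphic matroid of `G`: a maximal forest (spanning forest). -/
def IsGraphicBasis {V : Type*} (G : SimpleGraph V) (B : Set (Sym2 V)) : Prop :=
  IsGraphicIndep G B ∧ ∀ e ∈ G.edgeSet, e ∉ B → ¬ IsGraphicIndep G (insert e B)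

/-- The base polytope `B(M(G))` of the graphic matroid of `G`: the convex hull of the
indicator vectors of the bases. -/
def basePolytope {V : Type*} (G : SimpleGraph V) : Set (Sym2 V → ℝ) :=
  convexHull ℝ {x | ∃ B : Set (Sym2 V), IsGraphicBasis G B ∧
    x = B.indicator fun _ => (1 : ℝ)}

/-- The base polytope `B(M(G))`, regarded inside `ℝ^E` where `E` is the edge set of `G`. -/
def basePolytopeE {V : Type*} (G : SimpleGraph V) : Set (↥G.edgeSet → ℝ) :=
  convexHull ℝ {x | ∃ B : Set (Sym2 V), IsGraphicBasis G B ∧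
    x = (Subtype.val ⁻¹' B).indicator fun _ => (1 : ℝ)}

/-- A homogeneous inequality `g x ≥ 0` is valid for `P` and defines a facet (a supporting
hyperplane whose intersection with `P` has affine dimension one less than `P`). -/
def IsSupportingFaceIneq {α : Type*} (P : Set (α → ℝ)) (g : (α → ℝ) → ℝ) : Prop :=
  (∀ x ∈ P, 0 ≤ g x) ∧
  Module.finrank ℝ (vectorSpan ℝ {x ∈ P | g x = 0}) + 1 =
    Module.finrank ℝ (vectorSpan ℝ P)

/-! ### Multigraphs -/

/-- A finite undirected loopless multigraph on a vertex type `V` with edge type `E`. -/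
structure Multigraph (V E : Type*) where
  ends : E → Sym2 V
  loopless : ∀ e, ¬ (ends e).IsDiag

/-- The underlying simple graph of a multigraph. -/
def Multigraph.toSimple {V E : Type*} (G : Multigraph V E) : SimpleGraph V :=
  SimpleGraph.fromEdgeSet (Set.range G.ends)

/-- `E(S)` for a multigraph: the set of edges with both endpoints in `S`. -/
def Multigraph.edgesIn {V E : Type*} (G : Multigraph V E) (S : Set V) : Set E :=
  {e | ∀ v ∈ G.ends e, v ∈ S}

/-- A set of edges of a multigraph is a forest (an independent set of the graphic matroid):
no two parallel edges and no cycle. -/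
def IsMultiForest {V E : Type*} (G : Multigraph V E) (I : Set E) : Prop :=
  Set.InjOn G.ends I ∧ (SimpleGraph.fromEdgeSet (G.ends '' I)).IsAcyclic

/-- The independence polytope `P(M(G))` of the graphic matroid of a multigraph `G`. -/
def multiIndepPolytope {V E : Type*} (G : Multigraph V E) : Set (E → ℝ) :=
  convexHull ℝ {x | ∃ I : Set E, IsMultiForest G I ∧ x = I.indicator fun _ => (1 : ℝ)}

/-- The rank of a set of edges in the graphic matroid of a multigraph. -/
noncomputable def mrank {V E : Type*} (G : Multigraph V E) (A : Set E) : ℕ :=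
  sSup {n | ∃ I ⊆ A, IsMultiForest G I ∧ I.ncard = n}

/-- A flat of the graphic matroid of a multigraph: adding any further edge increases the rank. -/
def IsGraphicFlat {V E : Type*} (G : Multigraph V E) (A : Set E) : Prop :=
  ∀ e : E, e ∉ A → mrank G (insert e A) ≠ mrank G A

/-- A circuit of the graphic matroid of a multigraph: a minimal dependent set of edges. -/
def IsMultiCircuit {V E : Type*} (G : Multigraph V E) (C : Set E) : Prop :=
  ¬ IsMultiForest G C ∧ ∀ C' ⊂ C, IsMultiForest G C'

/-- The restriction of the graphic matroid of `G` to `A` is a connected matroid: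
`A` is nonempty and any two distinct elements of `A` lie on a common circuit inside `A`. -/
def ConnectedRestriction {V E : Type*} (G : Multigraph V E) (A : Set E) : Prop :=
  A.Nonempty ∧ ∀ e ∈ A, ∀ f ∈ A, e ≠ f → ∃ C ⊆ A, IsMultiCircuit G C ∧ e ∈ C ∧ f ∈ C

/-- `G` is the `m`-blow-up of the simple graph `H`: every edge of `H` is replaced by exactly
`m` parallel edges and there are no other edges. -/
def IsBlowUp {V E : Type*} (G : Multigraph V E) (m : ℕ) (H : SimpleGraph V) : Prop :=
  (∀ p ∈ H.edgeSet, {e : E | G.ends e = p}.ncard = m) ∧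
  ∀ p : Sym2 V, p ∉ H.edgeSet → {e : E | G.ends e = p} = ∅

/-- The condition `(♣)_δ`: `(δ-1)|E(S)| + 1 = δ(|S|-1)` for every vertex subset `S` inducing a
`2`-connected subgraph. -/
def ClubCond {V : Type*} (H : SimpleGraph V) (δ : ℕ) : Prop :=
  ∀ S : Set V, IsTwoConnected (H.induce S) →
    (δ - 1) * (edgesIn H S).ncard + 1 = δ * (S.ncard - 1)

/-! ### Chordality, `K₄` minors, cycle attachments -/

/-- A chordless cycle: a cycle such that every edge of `G` between vertices of the cycle is an
edge of the cycle. -/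
def IsChordlessCycle {V : Type*} (G : SimpleGraph V) {v : V} (c : G.Walk v v) : Prop :=
  c.IsCycle ∧ ∀ e ∈ edgesIn G {u : V | u ∈ c.support}, e ∈ c.edges

/-- `G` is `δ`-chordal: every cycle without a chord has exactly `δ + 1` edges. -/
def IsDeltaChordal {V : Type*} (G : SimpleGraph V) (δ : ℕ) : Prop :=
  ∀ (v : V) (c : G.Walk v v), IsChordlessCycle G c → c.length = δ + 1

/-- `G` has a `K₄` minor: there are four disjoint nonempty connected branch sets pairwise
joined by an edge. -/
def HasK4Minor {V : Type*} (G : SimpleGraph V) : Prop :=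
  ∃ B : Fin 4 → Set V, (∀ i, (B i).Nonempty) ∧ (∀ i, (G.induce (B i)).Connected) ∧
    (Pairwise fun i j => Disjoint (B i) (B j)) ∧
    (Pairwise fun i j => ∃ u ∈ B i, ∃ v ∈ B j, G.Adj u v)

/-- One step of attaching a new `(δ+1)`-cycle to an edge: `B` is obtained from `A` by adding
`δ - 1` new vertices forming a path of length `δ` between the endpoints of an edge of
`H[A]`, these being all new edges. -/
def AttachStep {V : Type*} (H : SimpleGraph V) (δ : ℕ) (A B : Set V) : Prop :=
  ∃ q : Fin (δ + 1) → V, Function.Injective q ∧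
    H.Adj (q 0) (q (Fin.last δ)) ∧ q 0 ∈ A ∧ q (Fin.last δ) ∈ A ∧
    (∀ i : Fin (δ + 1), i ≠ 0 → i ≠ Fin.last δ → q i ∉ A) ∧
    B = A ∪ {x | ∃ i : Fin (δ + 1), i ≠ 0 ∧ i ≠ Fin.last δ ∧ q i = x} ∧
    edgesIn H B = edgesIn H A ∪ {e | ∃ i : Fin δ, e = s(q i.castSucc, q i.succ)}

/-- `H` can be constructed from the clique `K₂` by repeatedly attaching new `(δ+1)`-cycles to
edges of the preceding graph. -/
def ConstructibleFromK2 {V : Type*} (H : SimpleGraph V) (δ : ℕ) : Prop :=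
  ∃ (k : ℕ) (S : Fin (k + 1) → Set V),
    (∃ u v : V, H.Adj u v ∧ S 0 = {u, v}) ∧
    S (Fin.last k) = Set.univ ∧
    ∀ i : Fin k, AttachStep H δ (S i.castSucc) (S i.succ)

/-! ### Gluings, subdivisions, collisions, ears -/

/-- `G` (with distinguished edge `ab`) is the gluing of the graphs `Gs i` along the edges
`es i`: the disjoint union with all the edges `es i` identified to the single edge `ab`. -/
def IsGluing {ι : Type*} {Vf : ι → Type*} {W : Type*} (Gs : ∀ i, SimpleGraph (Vf i))
    (es : ∀ i, Sym2 (Vf i)) (G : SimpleGraph W) (a b : W) : Prop :=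
  a ≠ b ∧ G.Adj a b ∧
  ∃ φ : ∀ i, Vf i → W,
    (∀ i, Function.Injective (φ i)) ∧
    (∀ x : W, ∃ i, x ∈ Set.range (φ i)) ∧
    (∀ i, Sym2.map (φ i) (es i) = s(a, b)) ∧
    (∀ i j, i ≠ j → Set.range (φ i) ∩ Set.range (φ j) = {a, b}) ∧
    ∀ x y : W, G.Adj x y ↔ ∃ i, ∃ u v, (Gs i).Adj u v ∧ φ i u = x ∧ φ i v = y

/-- `G'` together with the path `q` is the subdivision of `G` obtained by replacing the edge
`uv` by a path of `m` edges `q 0, …, q m` through new vertices. -/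
def IsSubdivisionAt {V W : Type*} (G : SimpleGraph V) (u v : V) {m : ℕ}
    (G' : SimpleGraph W) (q : Fin (m + 1) → W) : Prop :=
  ∃ φ : V → W, Function.Injective φ ∧ Function.Injective q ∧
    q 0 = φ u ∧ q (Fin.last m) = φ v ∧
    (∀ i : Fin (m + 1), i ≠ 0 → i ≠ Fin.last m → q i ∉ Set.range φ) ∧
    (∀ x : W, x ∈ Set.range φ ∨ x ∈ Set.range q) ∧
    ∀ x y : W, G'.Adj x y ↔
      ((∃ a b : V, G.Adj a b ∧ s(a, b) ≠ s(u, v) ∧ φ a = x ∧ φ b = y) ∨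
       ∃ i : Fin m, s(x, y) = s(q i.castSucc, q i.succ))

/-- `G` (with the distinguished nonadjacent pair `a b`) is the collision of `G₁` and `G₂` on
the edges `e₁, e₂`: the disjoint union with `e₁` and `e₂` identified and then deleted. -/
def IsCollision {V₁ V₂ W : Type*} (G₁ : SimpleGraph V₁) (G₂ : SimpleGraph V₂)
    (e₁ : Sym2 V₁) (e₂ : Sym2 V₂) (G : SimpleGraph W) (a b : W) : Prop :=
  a ≠ b ∧ ¬ G.Adj a b ∧
  ∃ (φ₁ : V₁ → W) (φ₂ : V₂ → W),
    Function.Injective φ₁ ∧ Function.Injective φ₂ ∧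
    Sym2.map φ₁ e₁ = s(a, b) ∧ Sym2.map φ₂ e₂ = s(a, b) ∧
    (∀ x : W, x ∈ Set.range φ₁ ∨ x ∈ Set.range φ₂) ∧
    Set.range φ₁ ∩ Set.range φ₂ = {a, b} ∧
    ∀ x y : W, G.Adj x y ↔
      ((∃ u v, G₁.Adj u v ∧ s(u, v) ≠ e₁ ∧ φ₁ u = x ∧ φ₁ v = y) ∨
       (∃ u v, G₂.Adj u v ∧ s(u, v) ≠ e₂ ∧ φ₂ u = x ∧ φ₂ v = y))

/-- The inner vertices of an ear. -/
def earInner {V : Type*} {s : ℕ} (p : Fin (s + 1) → V) : Set V :=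
  {x | ∃ i : Fin (s + 1), i ≠ 0 ∧ i ≠ Fin.last s ∧ p i = x}

/-- The edges of an ear. -/
def earEdges {V : Type*} {s : ℕ} (p : Fin (s + 1) → V) : Set (Sym2 V) :=
  {e | ∃ i : Fin s, e = s(p i.castSucc, p i.succ)}

/-- An `s`-ear of `G`: a path with `s` edges whose inner vertices have degree `2` in `G`. -/
def IsEar {V : Type*} (G : SimpleGraph V) {s : ℕ} (p : Fin (s + 1) → V) : Prop :=
  Function.Injective p ∧ (∀ i : Fin s, G.Adj (p i.castSucc) (p i.succ)) ∧
  ∀ i : Fin (s + 1), i ≠ 0 → i ≠ Fin.last s → (G.neighborSet (p i)).ncard = 2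

/-- `T` is the vertex set of an inclusion-maximal proper `2`-connected induced subgraph. -/
def IsMaxProperTwoConnected {V : Type*} (G : SimpleGraph V) (T : Set V) : Prop :=
  IsTwoConnected (G.induce T) ∧ T ≠ Set.univ ∧
  ∀ T' : Set V, T ⊆ T' → T' ≠ Set.univ → IsTwoConnected (G.induce T') → T' = T

/-! ### `(♠)₂` and `3`-connectivity -/

/-- A `2`-connected graph satisfies the equalities `(♠)₂`:
`|E| = 2(|V|-1)` and `|E(S)| = 2|S| - 3` for every good flat `S`. -/
def Spade2 {V : Type*} (G : SimpleGraph V) : Prop :=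
  IsTwoConnected G ∧ G.edgeSet.ncard = 2 * (Nat.card V - 1) ∧
  ∀ S : Set V, IsGoodFlat G S → (edgesIn G S).ncard = 2 * S.ncard - 3

/-- A graph is `3`-connected if it has more than `3` vertices and remains connected after
deletion of any two vertices. -/
def IsThreeConnected {V : Type*} (G : SimpleGraph V) : Prop :=
  3 < Nat.card V ∧ ∀ u v : V, (G.induce {x : V | x ≠ u ∧ x ≠ v}).Connected

/-! ### Inductive constructions -/

/-- Graphs obtainable from the `δ`-cycle by gluings (Proposition `construction1`) and
`(δ-1)`-subdivisions (Proposition `construction2`). -/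
inductive Obtainable (δ : ℕ) : {W : Type} → SimpleGraph W → Prop
  | cycle {W : Type} (G : SimpleGraph W) (e : G ≃g SimpleGraph.cycleGraph δ) :
      Obtainable δ G
  | glue {Vf : Fin (δ - 1) → Type} {W : Type}
      (Gs : ∀ i, SimpleGraph (Vf i)) (ws : ∀ i, Sym2 (Vf i) → ℕ) (es : ∀ i, Sym2 (Vf i))
      (G : SimpleGraph W) (a b : W)
      (hob : ∀ i, Obtainable δ (Gs i))
      (hsp : ∀ i, SatisfiesSpade (Gs i) δ (ws i))
      (hes : ∀ i, es i ∈ (Gs i).edgeSet)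
      (hwe : ∀ i, ws i (es i) = δ - 1)
      (hgl : IsGluing Gs es G a b) : Obtainable δ G
  | subdivide {V W : Type} (G : SimpleGraph V) (w : Sym2 V → ℕ) (u v : V)
      (G' : SimpleGraph W) (q : Fin (δ - 1 + 1) → W)
      (hob : Obtainable δ G) (hsp : SatisfiesSpade G δ w)
      (huv : G.Adj u v) (hw1 : w s(u, v) = 1)
      (hsub : IsSubdivisionAt G u v G' q) : Obtainable δ G'

/-- Graphs obtainable from the clique `K₄` by a finite sequence of collisions. -/
inductive ObtainableK4 : {W : Type} → SimpleGraph W → Prop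
  | k4 {W : Type} (G : SimpleGraph W) (e : G ≃g (⊤ : SimpleGraph (Fin 4))) :
      ObtainableK4 G
  | collide {V₁ V₂ W : Type} (G₁ : SimpleGraph V₁) (G₂ : SimpleGraph V₂)
      (e₁ : Sym2 V₁) (e₂ : Sym2 V₂) (G : SimpleGraph W) (a b : W)
      (h₁ : ObtainableK4 G₁) (h₂ : ObtainableK4 G₂)
      (he₁ : e₁ ∈ G₁.edgeSet) (he₂ : e₂ ∈ G₂.edgeSet)
      (hc : IsCollision G₁ G₂ e₁ e₂ G a b) : ObtainableK4 G

/-!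
If `G - b` is `2`-connected, then `V ∖ {b}` is a good flat, and comparing (iv) with (v) for it
gives `deg b = δ + 1`. If this holds for every vertex, double counting gives
`|V| (δ + 1) = 2δ (|V| - 1)`, impossible for `δ ≥ 3` and `|V| ≥ 4` (by (iv), `|V| ≥ 2δ`).

Otherwise `G` has a `2`-separator. Among all `2`-separators `{x, y}`, take a fragment `D`
(a union of components of `G - {x, y}`) that is inclusion-minimal. Contractibility of `xy` would
make `G - {x, y}` connected, so `x` and `y` are not adjacent; deletability gives minimum degree
`3`; and minimality then shows that `G - b` is `2`-connected for every `b ∈ D`. So all vertices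
of `D` have degree `δ + 1`, and `H = D ∪ {x, y}` spans at most `(δ + 3)|D| / 2` edges. But
either `H` (if `G - H` is connected) or `V ∖ D` (if not) is a good flat, and (v) for it forces
`|E(H)| > δ |D|`, which contradicts `δ ≥ 3`.
-/

lemma exists_ne_ne_of_three_le_card {V : Type*} [Finite V] (h : 3 ≤ Nat.card V) (a b : V) :
    ∃ w, w ≠ a ∧ w ≠ b := by
  by_contra! hab
  have hsub : (Set.univ : Set V) ⊆ {a, b} := fun w _ => by
    by_cases hwa : w = a
    exacts [.inl hwa, .inr (hab w hwa)]
  have := (Set.ncard_le_ncard hsub).trans (Set.ncard_insert_le a {b})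
  rw [Set.ncard_univ, Set.ncard_singleton] at this
  omega


section ConnectedIn

variable {V : Type*} {G : SimpleGraph V} {U W K : Set V} {z : V}

/-- No edge of `G` inside `U` leaves `K`. -/
def IsClosedIn (G : SimpleGraph V) (U K : Set V) : Prop :=
  ∀ ⦃a⦄, a ∈ U → ∀ ⦃w⦄, w ∈ U → G.Adj a w → a ∈ K → w ∈ K

/-- `G[U]` is connected, phrased as: every set closed in `U` and meeting `U` contains `U`. -/
def ConnectedIn (G : SimpleGraph V) (U : Set V) : Prop :=
  U.Nonempty ∧ ∀ K, IsClosedIn G U K → (U ∩ K).Nonempty → U ⊆ K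

def TwoConnectedIn (G : SimpleGraph V) (U : Set V) : Prop :=
  ConnectedIn G U ∧ ∀ c ∈ U, ConnectedIn G (U \ {c})

lemma IsClosedIn.compl (hK : IsClosedIn G U K) : IsClosedIn G U Kᶜ :=
  fun _ ha _ hw haw hKa hKw => hKa (hK hw ha haw.symm hKw)

lemma IsClosedIn.mono (hK : IsClosedIn G U K) (hWU : W ⊆ U) : IsClosedIn G W K :=
  fun _ ha _ hw => hK (hWU ha) (hWU hw)

lemma ConnectedIn.nonempty (hU : ConnectedIn G U) : U.Nonempty := hU.1

lemma ConnectedIn.subset_of_isClosedIn (hU : ConnectedIn G U) (hK : IsClosedIn G U K)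
    (hz : z ∈ U) (hzK : z ∈ K) : U ⊆ K :=
  hU.2 K hK ⟨z, hz, hzK⟩

lemma ConnectedIn.disjoint (hU : ConnectedIn G U) (hK : IsClosedIn G U K)
    (hz : z ∈ U) (hzK : z ∉ K) : Disjoint U K :=
  Set.disjoint_left.2 fun _ hu huK => hzK (hU.subset_of_isClosedIn hK hu huK hz)

lemma ConnectedIn.subset_or_subset_compl (hW : ConnectedIn G W) (hWU : W ⊆ U)
    (hK : IsClosedIn G U K) : W ⊆ K ∨ W ⊆ Kᶜ := by
  obtain ⟨w, hw⟩ := hW.nonempty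
  by_cases hwK : w ∈ K
  · exact .inl (hW.subset_of_isClosedIn (hK.mono hWU) hw hwK)
  · exact .inr (hW.subset_of_isClosedIn (hK.compl.mono hWU) hw hwK)

lemma connectedIn_of_isClosedIn (hz : z ∈ U)
    (h : ∀ K, IsClosedIn G U K → z ∉ K → Disjoint U K) : ConnectedIn G U := by
  refine ⟨⟨z, hz⟩, fun K hK ⟨v, hv, hvK⟩ u hu => ?_⟩
  by_cases hzK : z ∈ K
  · by_contra huK
    exact Set.disjoint_left.1 (h Kᶜ hK.compl (not_not.2 hzK)) hu huK
  · exact absurd hvK (Set.disjoint_left.1 (h K hK hzK) hv)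

lemma connectedIn_singleton (z : V) : ConnectedIn G {z} :=
  ⟨⟨z, rfl⟩, fun _ _ ⟨_, hz, hzK⟩ _ hu => (Set.mem_singleton_iff.1 hu ▸ hz) ▸ hzK⟩

lemma ConnectedIn.union (hU : ConnectedIn G U) (hW : ConnectedIn G W) (hUW : (U ∩ W).Nonempty) :
    ConnectedIn G (U ∪ W) := by
  obtain ⟨z, hzU, hzW⟩ := hUW
  refine connectedIn_of_isClosedIn (Or.inl hzU) fun K hK hzK => ?_
  exact Set.disjoint_union_left.2 ⟨hU.disjoint (hK.mono Set.subset_union_left) hzU hzK,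
    hW.disjoint (hK.mono Set.subset_union_right) hzW hzK⟩

lemma ConnectedIn.exists_adj (hU : ConnectedIn G U) (hz : z ∈ U) {w : V} (hw : w ∈ U)
    (hzw : z ≠ w) : ∃ u ∈ U, G.Adj z u := by
  by_contra! h
  have hK : IsClosedIn G U {z} := fun _ _ _ hu hau ha => absurd (ha ▸ hau) (h _ hu)
  exact hzw (hU.subset_of_isClosedIn hK hz rfl hw).symm

lemma ConnectedIn.image {W' : Type*} {H : SimpleGraph W'} (f : V → W') (hU : ConnectedIn G U)
    (hf : ∀ a ∈ U, ∀ b ∈ U, G.Adj a b → f a = f b ∨ H.Adj (f a) (f b)) :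
    ConnectedIn H (f '' U) := by
  obtain ⟨u, hu⟩ := hU.nonempty
  refine ⟨⟨f u, u, hu, rfl⟩, fun K hK ⟨_, ⟨k, hk, rfl⟩, hkK⟩ => ?_⟩
  have hK' : IsClosedIn G U (f ⁻¹' K) := fun a ha b hb hab hfa => by
    rcases hf a ha b hb hab with h | h
    · rw [Set.mem_preimage, ← h]
      exact hfa
    · exact hK ⟨a, ha, rfl⟩ ⟨b, hb, rfl⟩ h hfa
  rintro _ ⟨v, hv, rfl⟩
  exact hU.subset_of_isClosedIn hK' hk hkK hv

lemma ConnectedIn.of_image {W' : Type*} {H : SimpleGraph W'} (f : V → W')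
    (hU : ConnectedIn H (f '' U)) (hinj : Set.InjOn f U)
    (hf : ∀ a ∈ U, ∀ b ∈ U, H.Adj (f a) (f b) → G.Adj a b) : ConnectedIn G U := by
  obtain ⟨_, u, hu, rfl⟩ := hU.nonempty
  refine ⟨⟨u, hu⟩, fun K hK ⟨k, hk, hkK⟩ v hv => ?_⟩
  have hK' : IsClosedIn H (f '' U) (f '' (U ∩ K)) := by
    rintro _ ⟨a, ha, rfl⟩ _ ⟨b, hb, rfl⟩ hab ⟨a', ⟨ha', ha'K⟩, hfa'⟩
    rw [← hinj ha' ha hfa'] at hab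
    exact ⟨b, ⟨hb, hK ha' hb (hf a' ha' b hb hab) ha'K⟩, rfl⟩
  obtain ⟨v', ⟨hv', hv'K⟩, hfv⟩ :=
    hU.subset_of_isClosedIn hK' ⟨k, hk, rfl⟩ ⟨k, ⟨hk, hkK⟩, rfl⟩ ⟨v, hv, rfl⟩
  exact hinj hv' hv hfv ▸ hv'K

lemma connectedIn_univ_iff : ConnectedIn G Set.univ ↔ G.Connected := by
  constructor
  · rintro ⟨⟨u, -⟩, hU⟩
    have hK : IsClosedIn G Set.univ {w | G.Reachable u w} :=
      fun _ _ _ _ hab hua => hua.trans hab.reachable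
    have hu := hU _ hK ⟨u, trivial, Reachable.refl u⟩
    have : Nonempty V := ⟨u⟩
    exact ⟨fun v w => (hu (Set.mem_univ v)).symm.trans (hu (Set.mem_univ w))⟩
  · intro hG
    obtain ⟨u⟩ := hG.nonempty
    refine ⟨⟨u, trivial⟩, fun K hK ⟨k, _, hk⟩ v _ => ?_⟩
    have hwalk : ∀ {a b : V}, G.Walk a b → a ∈ K → b ∈ K := by
      intro a b p
      induction p with
      | nil => exact id
      | cons hab _ ih => exact fun ha => ih (hK trivial trivial hab ha)
    exact hwalk (hG.preconnected k v).some hk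

lemma connectedIn_iff_connected_induce : ConnectedIn G U ↔ (G.induce U).Connected := by
  rw [← connectedIn_univ_iff]
  have hU : ((↑) : U → V) '' Set.univ = U := by simp
  exact ⟨fun h => (hU ▸ h).of_image _ Subtype.val_injective.injOn fun _ _ _ _ h => h,
    fun h => hU ▸ h.image _ fun _ _ _ _ h => .inr h⟩

lemma isTwoConnected_iff :
    IsTwoConnected G ↔ ConnectedIn G Set.univ ∧ ∀ v, ConnectedIn G {v}ᶜ := by
  rw [connectedIn_univ_iff]
  simp only [IsTwoConnected, connectedIn_iff_connected_induce]
  rfl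

lemma TwoConnectedIn.isTwoConnected_induce (hU : TwoConnectedIn G U) :
    IsTwoConnected (G.induce U) := by
  refine isTwoConnected_iff.2 ⟨?_, fun c => ?_⟩
  · exact connectedIn_univ_iff.2 (connectedIn_iff_connected_induce.1 hU.1)
  · refine ConnectedIn.of_image ((↑) : U → V) ?_ Subtype.val_injective.injOn
      fun _ _ _ _ h => h
    convert hU.2 c c.2
    ext v
    simp [and_comm]

end ConnectedIn


section MinimumDegree

variable {V : Type*} {G : SimpleGraph V}

lemma IsTwoConnected.not_neighborSet_subset_singleton (hG : IsTwoConnected G) {z a : V}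
    (hw : ∃ w, w ≠ z ∧ w ≠ a) : ¬ G.neighborSet z ⊆ {a} := by
  intro hN
  obtain ⟨w, hwz, hwa⟩ := hw
  have hU : ConnectedIn G (insert z {a}ᶜ) := by
    rcases eq_or_ne z a with rfl | hza
    · convert (isTwoConnected_iff.1 hG).1
      simp [Set.eq_univ_iff_forall, em]
    · rw [Set.insert_eq_of_mem hza]
      exact (isTwoConnected_iff.1 hG).2 a
  have hK : IsClosedIn G (insert z {a}ᶜ) {z} := by
    rintro u - v hv huv rfl
    rcases hv with rfl | hva
    exacts [rfl, absurd (hN huv) hva]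
  exact hwz (hU.subset_of_isClosedIn hK (Set.mem_insert z _) rfl (Set.mem_insert_of_mem z hwa))

lemma IsTwoConnected.not_neighborSet_subset_pair [Finite V] (hG : IsTwoConnected G)
    (hdel : ∀ e ∈ G.edgeSet, IsTwoConnected (G.deleteEdges {e})) (h3 : 3 ≤ Nat.card V)
    (z u v : V) : ¬ G.neighborSet z ⊆ {u, v} := by
  intro hN
  obtain ⟨w, hwz, hwv⟩ := exists_ne_ne_of_three_le_card h3 z v
  by_cases hzu : G.Adj z u
  · refine (hdel s(z, u) hzu).not_neighborSet_subset_singleton ⟨w, hwz, hwv⟩ fun t ht => ?_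
    rw [mem_neighborSet, deleteEdges_adj] at ht
    rcases hN ht.1 with rfl | rfl
    exacts [absurd rfl ht.2, rfl]
  · exact hG.not_neighborSet_subset_singleton ⟨w, hwz, hwv⟩ fun t ht =>
      (hN ht).resolve_left fun htu => hzu (htu ▸ ht)

end MinimumDegree

section Contraction

variable {V : Type*} {G : SimpleGraph V} {F : Set (Sym2 V)}

lemma contractEdges_adj {c d : (fromEdgeSet F).ConnectedComponent} :
    (contractEdges G F).Adj c d ↔ c ≠ d ∧ ∃ u v, G.Adj u v ∧
      (fromEdgeSet F).connectedComponentMk u = c ∧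
        (fromEdgeSet F).connectedComponentMk v = d := by
  rw [contractEdges, fromRel_adj]
  constructor
  · rintro ⟨hcd, h | ⟨u, v, huv, hu, hv⟩⟩
    · exact ⟨hcd, h⟩
    · exact ⟨hcd, v, u, huv.symm, hv, hu⟩
  · rintro ⟨hcd, h⟩
    exact ⟨hcd, .inl h⟩

lemma eq_or_adj_contractEdges {u v : V} (h : G.Adj u v) :
    (fromEdgeSet F).connectedComponentMk u = (fromEdgeSet F).connectedComponentMk v ∨
      (contractEdges G F).Adj ((fromEdgeSet F).connectedComponentMk u)
        ((fromEdgeSet F).connectedComponentMk v) := by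
  by_cases huv : (fromEdgeSet F).connectedComponentMk u = (fromEdgeSet F).connectedComponentMk v
  · exact .inl huv
  · exact .inr (contractEdges_adj.2 ⟨huv, u, v, h, rfl, rfl⟩)

lemma eq_of_connectedComponentMk_eq {u v : V} (hu : ∀ e ∈ F, u ∉ e)
    (h : (fromEdgeSet F).connectedComponentMk v = (fromEdgeSet F).connectedComponentMk u) :
    v = u := by
  obtain ⟨p⟩ := (ConnectedComponent.eq.1 h).symm
  cases p with
  | nil => rfl
  | cons ha _ => exact absurd (Sym2.mem_mk_left _ _) (hu _ ((fromEdgeSet_adj F).1 ha).1)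

lemma image_connectedComponentMk_eq_compl {A : Set V} {w : V}
    (hA : ∀ u, u ∈ A ↔ (fromEdgeSet F).connectedComponentMk u ≠
      (fromEdgeSet F).connectedComponentMk w) :
    (fromEdgeSet F).connectedComponentMk '' A = {(fromEdgeSet F).connectedComponentMk w}ᶜ := by
  ext κ
  obtain ⟨u, rfl⟩ := κ.exists_rep
  refine ⟨?_, fun hu => ⟨u, (hA u).2 hu, rfl⟩⟩
  rintro ⟨v, hv, hvu⟩
  exact hvu ▸ (hA v).1 hv

lemma isTwoConnected_contractEdges_edgesIn (hG : IsTwoConnected G) {S : Set V}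
    (hS : ConnectedIn G S) (hSc : ConnectedIn G Sᶜ) :
    IsTwoConnected (contractEdges G (edgesIn G S)) := by
  set π := (fromEdgeSet (edgesIn G S)).connectedComponentMk
  have hπ : ∀ a ∈ Set.univ, ∀ b ∈ Set.univ, G.Adj a b →
      π a = π b ∨ (contractEdges G (edgesIn G S)).Adj (π a) (π b) :=
    fun _ _ _ _ => eq_or_adj_contractEdges
  obtain ⟨s, hs⟩ := hS.nonempty
  have hπS : ∀ u ∈ S, π u = π s := by
    refine hS.subset_of_isClosedIn (K := {u | π u = π s}) ?_ hs rfl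
    intro a ha b hb hab hπa
    refine Eq.trans (ConnectedComponent.eq.2 (Adj.reachable ?_)).symm hπa
    refine (fromEdgeSet_adj _).2 ⟨⟨hab, fun v hv => ?_⟩, hab.ne⟩
    rcases Sym2.mem_iff.1 hv with rfl | rfl <;> assumption
  have hπout : ∀ {u v}, u ∉ S → π v = π u → v = u :=
    fun hu => eq_of_connectedComponentMk_eq fun _ he hue => hu (he.2 _ hue)
  -- `S` collapses to one vertex and every vertex outside `S` is its own class, so deleting a
  -- vertex of the contraction leaves the image of `G - S` or of some `G - w`.
  rw [isTwoConnected_iff]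
  refine ⟨?_, fun κ => ?_⟩
  · have himage : π '' Set.univ = Set.univ :=
      Set.image_univ_of_surjective fun κ => κ.exists_rep
    exact himage ▸ (isTwoConnected_iff.1 hG).1.image π hπ
  obtain ⟨w, rfl⟩ := κ.exists_rep
  by_cases hw : w ∈ S
  · have himage : π '' Sᶜ = {π w}ᶜ := by
      refine image_connectedComponentMk_eq_compl fun u => ⟨fun hu huw => ?_, fun hu huS => ?_⟩
      · exact hu (hπout hu huw.symm ▸ hw)
      · exact hu ((hπS u huS).trans (hπS w hw).symm)
    exact himage ▸ hSc.image π fun a _ b _ => hπ a trivial b trivial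
  · have himage : π '' {w}ᶜ = {π w}ᶜ :=
      image_connectedComponentMk_eq_compl fun u =>
        ⟨fun hu huw => hu (hπout hw huw), fun hu huw => hu (congrArg π huw)⟩
    exact himage ▸ ((isTwoConnected_iff.1 hG).2 w).image π fun a _ b _ => hπ a trivial b trivial

lemma connectedIn_compl_pair_of_contractEdges {x y : V} (hxy : x ≠ y)
    (h : IsTwoConnected (contractEdges G {s(x, y)})) : ConnectedIn G {x, y}ᶜ := by
  set π := (fromEdgeSet {s(x, y)}).connectedComponentMk
  have hπ : ∀ {u v}, u ∉ ({x, y} : Set V) → π v = π u → v = u := by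
    refine fun hu => eq_of_connectedComponentMk_eq fun e he hue => hu ?_
    rw [Set.mem_singleton_iff.1 he] at hue
    rcases Sym2.mem_iff.1 hue with rfl | rfl <;> simp
  have hπxy : π y = π x :=
    ConnectedComponent.eq.2 (Adj.reachable ((fromEdgeSet_adj _).2 ⟨Sym2.eq_swap, hxy.symm⟩))
  have himage : π '' {x, y}ᶜ = {π x}ᶜ := by
    refine image_connectedComponentMk_eq_compl fun u => ⟨fun hu hux => hu ?_, fun hu hxy' => ?_⟩
    · rw [← hπ hu hux.symm]
      exact Set.mem_insert x _
    · rcases hxy' with rfl | rfl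
      exacts [hu rfl, hu hπxy]
  refine ConnectedIn.of_image π (himage ▸ (isTwoConnected_iff.1 h).2 (π x))
    (fun _ _ _ hb hab => hπ hb hab) fun a ha b hb hab => ?_
  obtain ⟨-, u, v, huv, hu, hv⟩ := contractEdges_adj.1 hab
  rwa [← hπ ha hu, ← hπ hb hv]

lemma isGoodFlat_of_twoConnectedIn (hG : IsTwoConnected G) {S : Set V} (hS : TwoConnectedIn G S)
    (hSc : ConnectedIn G Sᶜ) : IsGoodFlat G S :=
  ⟨hS.isTwoConnected_induce, isTwoConnected_contractEdges_edgesIn hG hS.1 hSc⟩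

end Contraction

section Fragments

variable {V : Type*} {G : SimpleGraph V} {U W F : Set V} {x y z a : V}

/-- `F` is a nonempty union of components of `G - {x, y}`, but not all of `G - {x, y}`. -/
structure IsFragmentOf (G : SimpleGraph V) (x y : V) (F : Set V) : Prop where
  nonempty : F.Nonempty
  subset_compl : F ⊆ {x, y}ᶜ
  isClosedIn : IsClosedIn G {x, y}ᶜ F
  not_subset : ¬ {x, y}ᶜ ⊆ F

def IsFragment (G : SimpleGraph V) (F : Set V) : Prop := ∃ x y, IsFragmentOf G x y F

lemma exists_isClosedIn_notMem (h : ¬ ConnectedIn G U) (hz : z ∈ U) :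
    ∃ K ⊆ U, K.Nonempty ∧ IsClosedIn G U K ∧ z ∉ K := by
  obtain ⟨K, hK, ⟨u, huU, huK⟩, hUK⟩ :
      ∃ K, IsClosedIn G U K ∧ (U ∩ K).Nonempty ∧ ¬ U ⊆ K := by
    unfold ConnectedIn at h
    push Not at h
    exact h ⟨z, hz⟩
  have hinter : ∀ {K}, IsClosedIn G U K → IsClosedIn G U (U ∩ K) :=
    fun hK _ ha _ hw haw h => ⟨hw, hK ha hw haw h.2⟩
  by_cases hzK : z ∈ K
  · obtain ⟨v, hvU, hvK⟩ := Set.not_subset.1 hUK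
    exact ⟨U ∩ Kᶜ, Set.inter_subset_left, ⟨v, hvU, hvK⟩, hinter hK.compl,
      fun h => h.2 hzK⟩
  · exact ⟨U ∩ K, Set.inter_subset_left, ⟨u, huU, huK⟩, hinter hK, fun h => hzK h.2⟩

lemma exists_isFragmentOf_disjoint (hW : ConnectedIn G W) (hWU : W ⊆ {x, y}ᶜ)
    (h : ¬ ConnectedIn G {x, y}ᶜ) : ∃ F, IsFragmentOf G x y F ∧ Disjoint F W := by
  obtain ⟨w, hw⟩ := hW.nonempty
  obtain ⟨F, hFU, hF, hFc, hwF⟩ := exists_isClosedIn_notMem h (hWU hw)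
  refine ⟨F, ⟨hF, hFU, hFc, fun h => hwF (h (hWU hw))⟩, ?_⟩
  rcases hW.subset_or_subset_compl hWU hFc with hWF | hWF
  · exact absurd (hWF hw) hwF
  · exact Set.disjoint_left.2 fun _ hv hvW => hWF hvW hv

lemma exists_isFragmentOf_of_not_twoConnectedIn [Finite V] (h3 : 3 ≤ Nat.card V)
    (hG : ∀ v, ConnectedIn G {v}ᶜ) (hx : ¬ TwoConnectedIn G {x}ᶜ) :
    ∃ y F, IsFragmentOf G x y F := by
  obtain ⟨y, -, hy⟩ : ∃ y ∈ ({x}ᶜ : Set V), ¬ ConnectedIn G ({x}ᶜ \ {y}) := by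
    by_contra! h
    exact hx ⟨hG x, h⟩
  rw [show ({x}ᶜ : Set V) \ {y} = {x, y}ᶜ by ext; simp] at hy
  obtain ⟨w, hwx, hwy⟩ := exists_ne_ne_of_three_le_card h3 x y
  obtain ⟨F, hF, -⟩ := exists_isFragmentOf_disjoint (connectedIn_singleton w)
    (by simp [hwx, hwy]) hy
  exact ⟨y, F, hF⟩

namespace IsFragmentOf

lemma symm (hF : IsFragmentOf G x y F) : IsFragmentOf G y x F := by
  obtain ⟨h₁, h₂, h₃, h₄⟩ := hF
  rw [Set.pair_comm] at h₂ h₃ h₄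
  exact ⟨h₁, h₂, h₃, h₄⟩

lemma left_notMem (hF : IsFragmentOf G x y F) : x ∉ F :=
  fun h => hF.subset_compl h (Set.mem_insert x _)

lemma right_notMem (hF : IsFragmentOf G x y F) : y ∉ F :=
  hF.symm.left_notMem

lemma not_connectedIn (hF : IsFragmentOf G x y F) : ¬ ConnectedIn G {x, y}ᶜ := by
  obtain ⟨⟨f, hf⟩, hFU, hFc, hUF⟩ := hF
  exact fun h => hUF (h.subset_of_isClosedIn hFc (hFU hf) hf)

lemma compl (hF : IsFragmentOf G x y F) : IsFragmentOf G x y (insert x (insert y F))ᶜ := by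
  obtain ⟨⟨f, hf⟩, hFU, hFc, hUF⟩ := hF
  obtain ⟨u, hu, huF⟩ := Set.not_subset.1 hUF
  refine ⟨⟨u, ?_⟩, fun v hv => ?_, fun a ha w hw haw haR => ?_, fun h => h (hFU hf) ?_⟩
  · simp_all
  · simp_all
  · have hwF : w ∉ F := fun hwF => haR (by simp [hFc hw ha haw.symm hwF])
    simp_all
  · simp [hf]

lemma adj_mem (hF : IsFragmentOf G x y F) (ha : a ∈ F) (haw : G.Adj a z) :
    z ∈ insert x (insert y F) := by
  by_cases hz : z ∈ ({x, y} : Set V)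
  · rcases hz with rfl | rfl <;> simp
  · exact Set.mem_insert_of_mem _
      (Set.mem_insert_of_mem _ (hF.isClosedIn (hF.subset_compl ha) hz haw ha))

lemma ne (hG : ∀ v, ConnectedIn G {v}ᶜ) (hF : IsFragmentOf G x y F) : x ≠ y := by
  rintro rfl
  exact hF.not_connectedIn (by simpa using hG x)

lemma connectedIn_insert (hG : ∀ v, ConnectedIn G {v}ᶜ) (hF : IsFragmentOf G x y F) :
    ConnectedIn G (insert x F) := by
  refine connectedIn_of_isClosedIn (Set.mem_insert x F) fun K hK hxK => ?_
  have hFK : IsClosedIn G {y}ᶜ (F ∩ K) := by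
    intro a ha w hw haw ⟨haF, haK⟩
    have hwy : w ≠ y := hw
    have hwxF : w ∈ insert x F := by simpa [hwy] using hF.adj_mem haF haw
    have hwK := hK (Set.mem_insert_of_mem x haF) hwxF haw haK
    exact ⟨(Set.mem_insert_iff.1 hwxF).resolve_left (by rintro rfl; exact hxK hwK), hwK⟩
  have hFy : F ⊆ {y}ᶜ := fun f hf hfy => hF.subset_compl hf (Set.mem_insert_of_mem x hfy)
  have := (hG y).disjoint hFK (hF.ne hG) fun h => hF.left_notMem h.1
  refine Set.disjoint_insert_left.2 ⟨hxK, Set.disjoint_left.2 fun f hf hfK => ?_⟩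
  exact Set.disjoint_left.1 this (hFy hf) ⟨hf, hfK⟩

lemma connectedIn_insert_insert (hG : ∀ v, ConnectedIn G {v}ᶜ) (hF : IsFragmentOf G x y F) :
    ConnectedIn G (insert x (insert y F)) := by
  have h := (hF.connectedIn_insert hG).union (hF.symm.connectedIn_insert hG)
    (hF.nonempty.mono fun f hf => ⟨Set.mem_insert_of_mem x hf, Set.mem_insert_of_mem y hf⟩)
  convert h using 1
  ext
  simp only [Set.mem_insert_iff, Set.mem_union]
  tauto

lemma connectedIn_insert_insert_diff (hG : ∀ v, ConnectedIn G {v}ᶜ) (hF : IsFragmentOf G x y F)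
    (hz : z ∉ F) :
    ConnectedIn G (insert x (insert y F) \ {z}) := by
  by_cases hzx : z = x
  · subst hzx
    rw [Set.insert_sdiff_self_of_notMem (by simp [hF.ne hG, hF.left_notMem])]
    exact hF.symm.connectedIn_insert hG
  by_cases hzy : z = y
  · subst hzy
    rw [Set.insert_comm,
      Set.insert_sdiff_self_of_notMem (by simp [(hF.ne hG).symm, hF.right_notMem])]
    exact hF.connectedIn_insert hG
  · rw [Set.sdiff_singleton_eq_self (by simp [hzx, hzy, hz])]
    exact hF.connectedIn_insert_insert hG

lemma exists_adj (hG : ∀ v, ConnectedIn G {v}ᶜ) (hF : IsFragmentOf G x y F) :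
    ∃ f ∈ F, G.Adj x f := by
  obtain ⟨f, hf⟩ := hF.nonempty
  obtain ⟨u, hu, hxu⟩ := (hF.connectedIn_insert hG).exists_adj (Set.mem_insert x F)
    (Set.mem_insert_of_mem x hf) fun h => hF.left_notMem (h ▸ hf)
  exact ⟨u, (Set.mem_insert_iff.1 hu).resolve_left hxu.ne', hxu⟩

end IsFragmentOf

end Fragments

section MinimalFragment

variable {V : Type*} {G : SimpleGraph V} {K A D R : Set V} {x y a b : V}

lemma disjoint_insert_insert_diff (hxK : x ∉ K) (hyK : y ∉ K) (hAK : Disjoint (A \ {a}) K) :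
    Disjoint (insert x (insert y A) \ {a}) K := by
  refine Set.disjoint_left.2 ?_
  rintro u ⟨rfl | rfl | huA, hua⟩ huK
  exacts [hxK huK, hyK huK, Set.disjoint_left.1 hAK ⟨huA, hua⟩ huK]

namespace IsFragmentOf

lemma isClosedIn_diff_inter (hA : IsFragmentOf G x y A)
    (hK : IsClosedIn G (insert x (insert y A) \ {a}) K) (hxK : x ∉ K) :
    IsClosedIn G {y, a}ᶜ ((A \ {a}) ∩ K) := by
  rintro f - w hw hfw ⟨⟨hfA, hfa⟩, hfK⟩
  have hwya : w ≠ y ∧ w ≠ a := by simpa using hw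
  have hwU : w ∈ insert x (insert y A) \ {a} := ⟨hA.adj_mem hfA hfw, hwya.2⟩
  have hwK := hK ⟨Set.mem_insert_of_mem _ (Set.mem_insert_of_mem _ hfA), hfa⟩ hwU hfw hfK
  obtain rfl | rfl | hwA := hwU.1
  exacts [absurd hwK hxK, absurd rfl hwya.1, ⟨⟨hwA, hwya.2⟩, hwK⟩]

lemma exists_subset_notMem_of_not_connectedIn (hA : IsFragmentOf G x y A)
    (hnc : ¬ ConnectedIn G A) (ha : a ∈ A) :
    ∃ A', IsFragmentOf G x y A' ∧ A' ⊆ A ∧ a ∉ A' := by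
  obtain ⟨A', hA'A, hA'ne, hA'c, haA'⟩ := exists_isClosedIn_notMem hnc ha
  refine ⟨A', ⟨hA'ne, hA'A.trans hA.subset_compl, fun u hu w hw huw huA' => ?_,
    fun h => haA' (h (hA.subset_compl ha))⟩, hA'A, haA'⟩
  exact hA'c (hA'A huA') (hA.isClosedIn hu hw huw (hA'A huA')) huw huA'

lemma connectedIn_of_minimal (hD : IsFragmentOf G x y D)
    (hmin : Minimal (IsFragment G) D) : ConnectedIn G D := by
  by_contra hnc
  obtain ⟨d, hd⟩ := hD.nonempty
  obtain ⟨D', hD', hD'D, hdD'⟩ := hD.exists_subset_notMem_of_not_connectedIn hnc hd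
  exact hmin.not_prop_of_ssubset ((Set.ssubset_iff_of_subset hD'D).2 ⟨d, hd, hdD'⟩)
    ⟨x, y, hD'⟩

lemma twoConnectedIn_insert_insert (hG : ∀ v, ConnectedIn G {v}ᶜ) (hA : IsFragmentOf G x y A)
    (h : ∀ a ∈ A, ConnectedIn G (insert x (insert y A) \ {a})) :
    TwoConnectedIn G (insert x (insert y A)) := by
  refine ⟨hA.connectedIn_insert_insert hG, fun c _ => ?_⟩
  by_cases hcA : c ∈ A
  exacts [h c hcA, hA.connectedIn_insert_insert_diff hG hcA]

lemma twoConnectedIn_insert_insert_of_not_connectedIn (hG : ∀ v, ConnectedIn G {v}ᶜ)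
    (hR : IsFragmentOf G x y R)
    (hnc : ¬ ConnectedIn G R) : TwoConnectedIn G (insert x (insert y R)) := by
  refine hR.twoConnectedIn_insert_insert hG fun r hr => ?_
  have hxr : x ≠ r := fun h => hR.left_notMem (h ▸ hr)
  have hyr : y ≠ r := fun h => hR.right_notMem (h ▸ hr)
  obtain ⟨R', hR', hR'R, hrR'⟩ := hR.exists_subset_notMem_of_not_connectedIn hnc hr
  refine connectedIn_of_isClosedIn (z := x) (by simp [hxr]) fun K hK hxK => ?_
  -- a part `R'` of `R - r` links `x` to `y` avoiding `r`
  have hyK : y ∉ K := by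
    have hsub : insert x (insert y R') ⊆ insert x (insert y R) \ {r} := by
      rintro u (rfl | rfl | hu)
      · simp [hxr]
      · simp [hyr]
      · exact ⟨by simp [hR'R hu], fun h => hrR' (Set.mem_singleton_iff.1 h ▸ hu)⟩
    rcases (hR'.connectedIn_insert_insert hG).subset_or_subset_compl hsub hK with h | h
    · exact absurd (h (Set.mem_insert x _)) hxK
    · exact h (by simp)
  refine disjoint_insert_insert_diff hxK hyK ?_
  have hc : IsClosedIn G {r}ᶜ ((R \ {r}) ∩ K) := by
    intro f _ w hw hfw hfK
    have hwr : w ≠ r := hw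
    have hfy : f ≠ y := fun h => hR.right_notMem (h ▸ hfK.1.1)
    by_cases hwy : w = y
    · subst hwy
      exact absurd (hK ⟨by simp [hfK.1.1], hfK.1.2⟩ (by simp [hwr]) hfw hfK.2) hyK
    · exact hR.isClosedIn_diff_inter hK hxK (by simp [hfy, hfK.1.2]) (by simp [hwy, hwr]) hfw hfK
  have h := (hG r).disjoint hc hxr fun h => hR.left_notMem h.1.1
  exact Set.disjoint_left.2 fun f hf hfK => Set.disjoint_left.1 h hf.2 ⟨hf, hfK⟩

lemma disjoint_diff_of_minimal (hG : ∀ v, ConnectedIn G {v}ᶜ) (hD : IsFragmentOf G x y D)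
    (hmin : Minimal (IsFragment G) D) (ha : a ∈ D)
    (hK : IsClosedIn G (insert x (insert y D) \ {a}) K) (hxK : x ∉ K) : Disjoint (D \ {a}) K := by
  rw [Set.disjoint_iff_inter_eq_empty]
  by_contra hne
  refine hmin.not_prop_of_ssubset
    ((Set.ssubset_iff_of_subset fun f hf => hf.1.1).2 ⟨a, ha, fun h => h.1.2 rfl⟩)
    ⟨y, a, Set.nonempty_iff_ne_empty.2 hne, ?_, hD.isClosedIn_diff_inter hK hxK, ?_⟩
  · rintro f ⟨⟨hfD, hfa⟩, -⟩
    simp only [Set.mem_compl_iff, Set.mem_insert_iff, Set.mem_singleton_iff, not_or]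
    exact ⟨fun h => hD.right_notMem (h ▸ hfD), hfa⟩
  · refine fun h => hD.left_notMem (h ?_).1.1
    simp only [Set.mem_compl_iff, Set.mem_insert_iff, Set.mem_singleton_iff, not_or]
    exact ⟨hD.ne hG, fun h => hD.left_notMem (h ▸ ha)⟩

lemma connectedIn_insert_insert_diff_of_minimal (hG : ∀ v, ConnectedIn G {v}ᶜ)
    (hdeg : ∀ z u v : V, ¬ G.neighborSet z ⊆ {u, v})
    (hD : IsFragmentOf G x y D) (hmin : Minimal (IsFragment G) D) (ha : a ∈ D) :
    ConnectedIn G (insert x (insert y D) \ {a}) := by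
  have hxa : x ≠ a := fun h => hD.left_notMem (h ▸ ha)
  refine connectedIn_of_isClosedIn (z := x) (by simp [hxa]) fun K hK hxK => ?_
  have hDK := hD.disjoint_diff_of_minimal hG hmin ha hK hxK
  refine disjoint_insert_insert_diff hxK (fun hyK => hdeg a x y fun w haw => ?_) hDK
  -- if `y ∈ K`, minimality applied from both sides gives `D = {a}`, so `N(a) ⊆ {x, y}`
  have hDK' := hD.symm.disjoint_diff_of_minimal hG hmin ha
    (Set.insert_comm x y D ▸ hK.compl) (not_not.2 hyK)
  obtain rfl | rfl | hwD := hD.adj_mem ha haw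
  · exact Set.mem_insert w _
  · simp
  · by_cases hwK : w ∈ K
    exacts [absurd hwK (Set.disjoint_left.1 hDK ⟨hwD, haw.ne'⟩),
      absurd hwK (Set.disjoint_left.1 hDK' ⟨hwD, haw.ne'⟩)]

lemma twoConnectedIn_compl_singleton_of_minimal (hG : ∀ v, ConnectedIn G {v}ᶜ)
    (hdeg : ∀ z u v : V, ¬ G.neighborSet z ⊆ {u, v})
    (hD : IsFragmentOf G x y D) (hmin : Minimal (IsFragment G) D) (hb : b ∈ D) :
    TwoConnectedIn G {b}ᶜ := by
  refine ⟨hG b, fun c _ => ?_⟩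
  rw [show {b}ᶜ \ {c} = ({b, c} : Set V)ᶜ by ext; simp]
  by_contra hnc
  by_cases hcR : c ∈ (insert x (insert y D))ᶜ
  · -- a fragment of `{b, c}` missing `(D ∪ {x, y}) \ {b}` avoids all neighbours of `b`
    have hW : insert x (insert y D) \ {b} ⊆ ({b, c} : Set V)ᶜ := by
      rintro u ⟨hu, hub⟩ (rfl | rfl)
      exacts [hub rfl, hcR hu]
    obtain ⟨F, hF, hFW⟩ := exists_isFragmentOf_disjoint
      (hD.connectedIn_insert_insert_diff_of_minimal hG hdeg hmin hb) hW hnc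
    obtain ⟨f, hf, hbf⟩ := hF.exists_adj hG
    exact Set.disjoint_left.1 hFW hf ⟨hD.adj_mem hb hbf, hbf.ne'⟩
  · -- a fragment of `{b, c}` missing `Dᶜ \ {c}` is a proper part of `D`
    have hbx : b ≠ x := fun h => hD.left_notMem (h ▸ hb)
    have hby : b ≠ y := fun h => hD.right_notMem (h ▸ hb)
    have hW : insert x (insert y (insert x (insert y D))ᶜ) \ {c} ⊆ ({b, c} : Set V)ᶜ := by
      rintro u ⟨hu, huc⟩ (rfl | rfl)
      exacts [by simp [hbx, hby, hb] at hu, huc rfl]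
    obtain ⟨F, hF, hFW⟩ := exists_isFragmentOf_disjoint
      (hD.compl.connectedIn_insert_insert_diff hG hcR) hW hnc
    refine hmin.not_prop_of_ssubset ((Set.ssubset_iff_of_subset fun f hf => ?_).2
      ⟨b, hb, hF.left_notMem⟩) ⟨b, c, hF⟩
    have hfW := Set.disjoint_left.1 hFW hf
    have hfbc := hF.subset_compl hf
    simp only [Set.mem_compl_iff, Set.mem_insert_iff, Set.mem_singleton_iff, not_or,
      Set.mem_sdiff] at hfW hfbc
    tauto

end IsFragmentOf

end MinimalFragment

section Counting

variable {V : Type*} {G : SimpleGraph V} {D : Set V} {x y : V}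

lemma ncard_edgeSet_induce (S : Set V) : (G.induce S).edgeSet.ncard = (edgesIn G S).ncard := by
  have h : Sym2.map ((↑) : S → V) '' (G.induce S).edgeSet = edgesIn G S := by
    ext e
    induction e using Sym2.ind with
    | _ u v =>
      constructor
      · rintro ⟨e', he', hee'⟩
        induction e' using Sym2.ind with
        | _ a b =>
          rw [Sym2.map_mk] at hee'
          rw [← hee']
          refine ⟨he', fun w hw => ?_⟩
          rcases Sym2.mem_iff.1 hw with rfl | rfl
          exacts [a.2, b.2]
      · rintro ⟨he, hm⟩
        exact ⟨s(⟨u, hm u (Sym2.mem_mk_left u v)⟩, ⟨v, hm v (Sym2.mem_mk_right u v)⟩), he,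
          rfl⟩
  rw [← h, Set.ncard_image_of_injective _ (Sym2.map.injective Subtype.val_injective)]

lemma ncard_edgeSet_eq_add [Finite V] (hxy : ¬ G.Adj x y)
    (hD : ∀ d ∈ D, ∀ w, G.Adj d w → w ∈ insert x (insert y D)) :
    G.edgeSet.ncard = (edgesIn G Dᶜ).ncard + (edgesIn G (insert x (insert y D))).ncard := by
  have hunion : edgesIn G Dᶜ ∪ edgesIn G (insert x (insert y D)) = G.edgeSet := by
    refine Set.Subset.antisymm (Set.union_subset (fun _ he => he.1) fun _ he => he.1)
      fun e he => ?_
    induction e using Sym2.ind with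
    | _ u v =>
      have huv : G.Adj u v := he
      by_cases hu : u ∈ D
      · refine .inr ⟨he, fun w hw => ?_⟩
        rcases Sym2.mem_iff.1 hw with rfl | rfl
        exacts [by simp [hu], hD u hu w huv]
      by_cases hv : v ∈ D
      · refine .inr ⟨he, fun w hw => ?_⟩
        rcases Sym2.mem_iff.1 hw with rfl | rfl
        exacts [hD v hv w huv.symm, by simp [hv]]
      · refine .inl ⟨he, fun w hw => ?_⟩
        rcases Sym2.mem_iff.1 hw with rfl | rfl <;> assumption
  have hdisj : Disjoint (edgesIn G Dᶜ) (edgesIn G (insert x (insert y D))) := by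
    refine Set.disjoint_left.2 fun e he he' => ?_
    induction e using Sym2.ind with
    | _ u v =>
      have huv : G.Adj u v := he.1
      have hu : u ∉ D := he.2 u (Sym2.mem_mk_left u v)
      have hv : v ∉ D := he.2 v (Sym2.mem_mk_right u v)
      have hu : u ∈ ({x, y} : Set V) := by simpa [hu] using he'.2 u (Sym2.mem_mk_left u v)
      have hv : v ∈ ({x, y} : Set V) := by simpa [hv] using he'.2 v (Sym2.mem_mk_right u v)
      rcases hu with rfl | rfl <;> rcases hv with rfl | rfl
      exacts [huv.ne rfl, hxy huv, hxy huv.symm, huv.ne rfl]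
  rw [← hunion, Set.ncard_union_eq hdisj]

variable [Fintype V]

lemma IsTwoConnected.two_mul_le_card (hG : IsTwoConnected G)
    (hE : G.edgeSet.ncard = δ * (Nat.card V - 1)) : 2 * δ ≤ Nat.card V := by
  classical
  obtain ⟨v⟩ := hG.1.nonempty
  obtain ⟨u, hu⟩ := ((isTwoConnected_iff.1 hG).2 v).nonempty
  have h2 : 1 < Nat.card V := (Finite.one_lt_card_iff_nontrivial).2 ⟨u, v, hu⟩
  have hch := G.card_edgeFinset_le_card_choose_two
  rw [← Set.ncard_coe_finset, coe_edgeFinset, hE, ← Nat.card_eq_fintype_card,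
    Nat.choose_two_right] at hch
  have := Nat.div_mul_le_self (Nat.card V * (Nat.card V - 1)) 2
  refine Nat.le_of_mul_le_mul_right (c := Nat.card V - 1) ?_ (by omega)
  nlinarith

variable [DecidableRel G.Adj]

lemma ncard_edgesIn_compl_singleton_add_degree (b : V) :
    (edgesIn G {b}ᶜ).ncard + G.degree b = G.edgeSet.ncard := by
  classical
  have hE : edgesIn G {b}ᶜ = G.edgeSet \ G.incidenceSet b := by
    ext e
    simp only [edgesIn, incidenceSet, Set.mem_ofPred_eq, Set.mem_sdiff, Set.mem_compl_iff,
      Set.mem_singleton_iff]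
    exact ⟨fun ⟨he, hm⟩ => ⟨he, fun h => hm b h.2 rfl⟩,
      fun ⟨he, hb⟩ => ⟨he, fun v hv hvb => hb ⟨he, hvb ▸ hv⟩⟩⟩
  rw [hE, ← card_incidenceSet_eq_degree, ← Nat.card_eq_fintype_card, Nat.card_coe_set_eq]
  exact Set.ncard_sdiff_add_ncard_of_subset (G.incidenceSet_subset b)

lemma two_mul_ncard_edgesIn_le {k : ℕ} (hxD : x ∉ D) (hyD : y ∉ D) (hne : x ≠ y)
    (hxy : ¬ G.Adj x y)
    (hD : ∀ d ∈ D, ∀ w, G.Adj d w → w ∈ insert x (insert y D))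
    (hdeg : ∀ d ∈ D, G.degree d = k) :
    2 * (edgesIn G (insert x (insert y D))).ncard ≤ (k + 2) * D.ncard := by
  classical
  set H := insert x (insert y D)
  have hdegH : ∀ v : H, (G.induce H).degree v ≤ if (v : V) ∈ D then k else D.ncard := by
    rintro ⟨v, hv⟩
    split_ifs with hvD
    · rw [← hdeg v hvD]
      refine le_of_eq ?_
      convert degree_induce_of_neighborSet_subset (v := ⟨v, hv⟩) fun w hw => hD v hvD w hw
    · rw [← card_neighborSet_eq_degree, ← Nat.card_eq_fintype_card, Nat.card_coe_set_eq,
        ← Set.ncard_image_of_injective _ Subtype.val_injective]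
      refine Set.ncard_le_ncard ?_ (Set.toFinite D)
      rintro _ ⟨⟨w, hw⟩, hvw, rfl⟩
      have hvw : G.Adj v w := hvw
      obtain rfl | rfl | hvD' := hv
      · obtain rfl | rfl | hwD := hw
        exacts [absurd rfl hvw.ne, absurd hvw hxy, hwD]
      · obtain rfl | rfl | hwD := hw
        exacts [absurd hvw.symm hxy, absurd rfl hvw.ne, hwD]
      · exact absurd hvD' hvD
  have hsum : ∑ v : H, (if (v : V) ∈ D then k else D.ncard) = (k + 2) * D.ncard := by
    rw [← Finset.sum_subtype H.toFinset (fun _ => Set.mem_toFinset)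
        fun v => if v ∈ D then k else D.ncard,
      Set.toFinset_insert, Set.toFinset_insert, Finset.sum_insert (by simp [hne, hxD]),
      Finset.sum_insert (by simp [hyD]), if_neg hxD, if_neg hyD,
      Finset.sum_congr rfl fun v hv => if_pos (Set.mem_toFinset.1 hv), Finset.sum_const,
      smul_eq_mul, ← Set.ncard_eq_toFinset_card']
    ring
  rw [← ncard_edgeSet_induce, ← coe_edgeFinset, Set.ncard_coe_finset,
    ← sum_degrees_eq_twice_card_edges, ← hsum]
  exact Finset.sum_le_sum fun v _ => hdegH v

end Counting

section Main

variable {V : Type*} [Fintype V] {G : SimpleGraph V} {δ : ℕ} {x y : V} {D : Set V}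

lemma degree_eq_of_twoConnectedIn_compl_singleton [DecidableRel G.Adj] (hG : IsTwoConnected G)
    (hE : G.edgeSet.ncard = δ * (Nat.card V - 1))
    (hflat : ∀ S : Set V, IsGoodFlat G S → 2 < S.ncard →
      (edgesIn G S).ncard + 1 = δ * (S.ncard - 1))
    (hn : 4 ≤ Nat.card V) {b : V} (hb : TwoConnectedIn G {b}ᶜ) : G.degree b = δ + 1 := by
  have hcard : ({b}ᶜ : Set V).ncard = Nat.card V - 1 := by
    rw [Set.ncard_compl, Set.ncard_singleton]
  have hb' := hflat {b}ᶜ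
    (isGoodFlat_of_twoConnectedIn hG hb (by simpa using connectedIn_singleton b)) (by omega)
  have hsplit := ncard_edgesIn_compl_singleton_add_degree (G := G) b
  rw [hcard] at hb'
  have : δ * (Nat.card V - 1) = δ * (Nat.card V - 1 - 1) + δ := by
    rw [← Nat.mul_succ]
    congr 1
    omega
  omega

lemma false_of_forall_degree_eq [DecidableRel G.Adj] (hδ : 2 < δ) (hn : 4 ≤ Nat.card V)
    (hE : G.edgeSet.ncard = δ * (Nat.card V - 1)) (hdeg : ∀ v, G.degree v = δ + 1) : False := by
  have h := G.sum_degrees_eq_twice_card_edges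
  simp only [hdeg, Finset.sum_const, Finset.card_univ, smul_eq_mul] at h
  rw [← Set.ncard_coe_finset, coe_edgeFinset, hE, ← Nat.card_eq_fintype_card] at h
  obtain ⟨m, hm⟩ : ∃ m, Nat.card V = m + 1 := ⟨Nat.card V - 1, by omega⟩
  rw [hm, Nat.add_sub_cancel] at h
  nlinarith

lemma ncard_edgesIn_insert_insert_of_isGoodFlat_compl
    (hE : G.edgeSet.ncard = δ * (Nat.card V - 1))
    (hflat : ∀ S : Set V, IsGoodFlat G S → 2 < S.ncard →
      (edgesIn G S).ncard + 1 = δ * (S.ncard - 1))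
    (hxy : ¬ G.Adj x y) (hD : ∀ d ∈ D, ∀ w, G.Adj d w → w ∈ insert x (insert y D))
    (hDc : IsGoodFlat G Dᶜ) (hcard : 2 < Dᶜ.ncard) :
    (edgesIn G (insert x (insert y D))).ncard = δ * D.ncard + 1 := by
  have hDc' := hflat Dᶜ hDc hcard
  have hsplit := ncard_edgeSet_eq_add hxy hD
  have hV := Set.ncard_add_ncard_compl D
  have : δ * (Nat.card V - 1) = δ * (Dᶜ.ncard - 1) + δ * D.ncard := by
    rw [← Nat.mul_add]
    congr 1
    omega
  omega

lemma IsFragmentOf.mul_ncard_lt_ncard_edgesIn_of_minimal (hδ : 1 < δ) (hG : IsTwoConnected G)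
    (hE : G.edgeSet.ncard = δ * (Nat.card V - 1))
    (hflat : ∀ S : Set V, IsGoodFlat G S → 2 < S.ncard →
      (edgesIn G S).ncard + 1 = δ * (S.ncard - 1))
    (hdeg : ∀ z u v : V, ¬ G.neighborSet z ⊆ {u, v}) (hxy : ¬ G.Adj x y)
    (hD : IsFragmentOf G x y D) (hmin : Minimal (IsFragment G) D) :
    δ * D.ncard < (edgesIn G (insert x (insert y D))).ncard := by
  have hG2 := (isTwoConnected_iff.1 hG).2
  have hxD := hD.left_notMem
  have hyD := hD.right_notMem
  have hne := hD.ne hG2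
  by_cases hR : ConnectedIn G (insert x (insert y D))ᶜ
  · have hH := hflat _ (isGoodFlat_of_twoConnectedIn hG (hD.twoConnectedIn_insert_insert hG2
      fun a ha => hD.connectedIn_insert_insert_diff_of_minimal hG2 hdeg hmin ha) hR)
    have hD1 := (Set.ncard_pos (Set.toFinite D)).2 hD.nonempty
    rw [Set.ncard_insert_of_notMem (by simp [hne, hxD]), Set.ncard_insert_of_notMem hyD,
      show D.ncard + 1 + 1 - 1 = D.ncard + 1 by omega, Nat.mul_succ] at hH
    have := hH (by omega)
    omega
  · have hDc : Dᶜ = insert x (insert y (insert x (insert y D))ᶜ) := by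
      ext u
      by_cases hux : u = x
      · simp [hux, hxD]
      by_cases huy : u = y
      · simp [huy, hyD]
      · simp [hux, huy]
    have hcard : 2 < Dᶜ.ncard := by
      rw [hDc, Set.ncard_insert_of_notMem (by simp [hne]), Set.ncard_insert_of_notMem (by simp)]
      have := (Set.ncard_pos (Set.toFinite _)).2 hD.compl.nonempty
      omega
    have hDc2 : IsGoodFlat G Dᶜ := isGoodFlat_of_twoConnectedIn hG
      (hDc ▸ hD.compl.twoConnectedIn_insert_insert_of_not_connectedIn hG2 hR)
      (by simpa using hD.connectedIn_of_minimal hmin)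
    rw [ncard_edgesIn_insert_insert_of_isGoodFlat_compl hE hflat hxy
      (fun _ hd _ => hD.adj_mem hd) hDc2 hcard]
    omega

lemma IsFragmentOf.false_of_minimal [DecidableRel G.Adj] (hδ : 2 < δ) (hG : IsTwoConnected G)
    (hE : G.edgeSet.ncard = δ * (Nat.card V - 1))
    (hflat : ∀ S : Set V, IsGoodFlat G S → 2 < S.ncard →
      (edgesIn G S).ncard + 1 = δ * (S.ncard - 1))
    (hdeg : ∀ z u v : V, ¬ G.neighborSet z ⊆ {u, v}) (hn : 4 ≤ Nat.card V)
    (hxy : ¬ G.Adj x y) (hD : IsFragmentOf G x y D)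
    (hmin : Minimal (IsFragment G) D) : False := by
  have hG2 := (isTwoConnected_iff.1 hG).2
  have hupper := two_mul_ncard_edgesIn_le hD.left_notMem hD.right_notMem (hD.ne hG2) hxy
    (fun _ hd _ => hD.adj_mem hd)
    fun d hd => degree_eq_of_twoConnectedIn_compl_singleton hG hE hflat hn
      (hD.twoConnectedIn_compl_singleton_of_minimal hG2 hdeg hmin hd)
  have hlower := hD.mul_ncard_lt_ncard_edgesIn_of_minimal (by omega) hG hE hflat hdeg hxy hmin
  nlinarith

end Main
theorem stmt14 (δ : ℕ) (hδ : 2 < δ) :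
    ∀ (V : Type*) [Fintype V] [DecidableEq V] (G : SimpleGraph V),
      ¬ (IsTwoConnected G ∧
        (∀ e ∈ G.edgeSet, IsTwoConnected (G.deleteEdges {e})) ∧
        (∀ e ∈ G.edgeSet, IsTwoConnected (contractEdges G {e})) ∧
        G.edgeSet.ncard = δ * (Nat.card V - 1) ∧
        ∀ S : Set V, IsGoodFlat G S → 2 < S.ncard →
          (edgesIn G S).ncard + 1 = δ * (S.ncard - 1)) := by
  rintro V _ _ G ⟨hG, hdel, hcon, hE, hflat⟩
  classical
  have hn : 4 ≤ Nat.card V := by have := hG.two_mul_le_card hE; omega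
  have hG2 := (isTwoConnected_iff.1 hG).2
  by_cases h3 : ∀ b, TwoConnectedIn G {b}ᶜ
  · exact false_of_forall_degree_eq hδ hn hE fun b =>
      degree_eq_of_twoConnectedIn_compl_singleton hG hE hflat hn (h3 b)
  push Not at h3
  obtain ⟨b, hb⟩ := h3
  obtain ⟨c, F, hF⟩ := exists_isFragmentOf_of_not_twoConnectedIn (by omega) hG2 hb
  obtain ⟨D, hmin⟩ := exists_minimal_of_wellFoundedLT (IsFragment G) ⟨F, b, c, hF⟩
  obtain ⟨x, y, hD⟩ := hmin.prop
  have hxy : ¬ G.Adj x y := fun hxy =>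
    hD.not_connectedIn (connectedIn_compl_pair_of_contractEdges hxy.ne (hcon _ hxy))
  exact hD.false_of_minimal hδ hG hE hflat (hG.not_neighborSet_subset_pair hdel (by omega)) hn
    hxy hmin

end Gor
end

section
/- Suppose G_1 and G_2 are 2-connected finite simple graphs each satisfying the equalities (♠)_2 (namely |E(G_i)| = 2(|V(G_i)|−1) and |E(S)| = 2|S|−3 for every good flat S of G_i), with chosen edges e_1 of G_1 and e_2 of G_2. Then the collision of G_1 and G_2 on e_1 and e_2, i.e. the graph obtained from the disjoint union of G_1 and G_2 by identifying e_1 with e_2 (together with their endpoints) and then deleting the identified edge, also satisfies the equalities (♠)_2. -/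
open SimpleGraph
open scoped Pointwise

namespace SimpleGraph

variable {α β : Type*} {X : SimpleGraph α} {Y : SimpleGraph β}

lemma Reachable.of_map (f : α → β) (h : ∀ ⦃x y⦄, X.Adj x y → Y.Reachable (f x) (f y))
    {x y : α} (hr : X.Reachable x y) : Y.Reachable (f x) (f y) := by
  rw [reachable_iff_reflTransGen] at hr ⊢
  exact hr.lift' f fun x y hxy => (reachable_iff_reflTransGen _ _).mp (h hxy)

lemma Reachable.apply_eq (f : α → β) (h : ∀ ⦃x y⦄, X.Adj x y → f x = f y) {x y : α}
    (hr : X.Reachable x y) : f x = f y :=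
  reachable_bot.mp (Reachable.of_map (Y := ⊥) f (fun _ _ hxy => reachable_bot.mpr (h hxy)) hr)

lemma Connected.of_surjective (f : α → β) (hf : Function.Surjective f)
    (h : ∀ ⦃x y⦄, X.Adj x y → Y.Reachable (f x) (f y)) (hX : X.Connected) : Y.Connected := by
  have : Nonempty β := hX.nonempty.map f
  refine ⟨fun c d => ?_⟩
  obtain ⟨x, rfl⟩ := hf c
  obtain ⟨y, rfl⟩ := hf d
  exact Reachable.of_map f h (hX.preconnected x y)

lemma Connected.induce_of_surjOn {s : Set α} {t : Set β} {f : α → β} (hmaps : Set.MapsTo f s t)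
    (hsurj : Set.SurjOn f s t)
    (hadj : ∀ ⦃x y⦄, x ∈ s → y ∈ s → X.Adj x y → f x = f y ∨ Y.Adj (f x) (f y))
    (hs : (X.induce s).Connected) : (Y.induce t).Connected := by
  refine Connected.of_surjective (hmaps.restrict f s t)
    (hmaps.restrict_surjective_iff.mpr hsurj) ?_ hs
  rintro ⟨x, hx⟩ ⟨y, hy⟩ hxy
  rcases hadj hx hy hxy with h | h
  · rw [show hmaps.restrict f s t ⟨x, hx⟩ = hmaps.restrict f s t ⟨y, hy⟩ from Subtype.ext h]
  · exact Adj.reachable h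

lemma Connected.induce_of_sup_edge {G : SimpleGraph α} {a b : α} {T : Set α}
    (h : ((G ⊔ edge a b).induce T).Connected)
    (hab : ∀ (ha : a ∈ T) (hb : b ∈ T), (G.induce T).Reachable ⟨a, ha⟩ ⟨b, hb⟩) :
    (G.induce T).Connected := by
  refine h.of_surjective id Function.surjective_id ?_
  rintro ⟨x, hx⟩ ⟨y, hy⟩ hxy
  simp only [comap_adj, Function.Embedding.subtype_apply, sup_adj, edge_adj] at hxy
  rcases hxy with hxy | ⟨⟨rfl, rfl⟩ | ⟨rfl, rfl⟩, -⟩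
  · exact Adj.reachable hxy
  · exact hab hx hy
  · exact (hab hy hx).symm

end SimpleGraph

namespace Gor

open Set

section TwoConnected

variable {α : Type*} {X : SimpleGraph α}

lemma IsTwoConnected.connected_induce (hX : IsTwoConnected X) {s : Set α}
    (hs : sᶜ.Subsingleton) : (X.induce s).Connected := by
  rcases hs.eq_empty_or_singleton with h | ⟨v, hv⟩
  · rw [compl_empty_iff.mp h]
    exact (induceUnivIso X).connected_iff.mpr hX.1
  · rw [← compl_compl s, hv]
    exact hX.2 v

lemma IsTwoConnected.connected_induce_of_subset {s t : Set α}
    (hs : IsTwoConnected (X.induce s)) (hts : t ⊆ s) (hst : (s \ t).Subsingleton) :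
    (X.induce t).Connected := by
  refine (hs.connected_induce (s := Subtype.val ⁻¹' t) ?_).induce_of_surjOn
    (f := Subtype.val) (fun x hx => hx) (fun x hx => ⟨⟨x, hts hx⟩, hx, rfl⟩)
    (fun x y _ _ hxy => Or.inr hxy)
  intro x hx y hy
  exact Subtype.ext (hst ⟨x.2, hx⟩ ⟨y.2, hy⟩)

lemma isTwoConnected_induce {s : Set α} (hs : (X.induce s).Connected)
    (hdel : ∀ v ∈ s, (X.induce (s \ {v})).Connected) : IsTwoConnected (X.induce s) := by
  refine ⟨hs, fun ⟨v, hv⟩ => (hdel v hv).of_surjective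
    (fun x : ↥(s \ {v}) => ⟨⟨x, x.2.1⟩, fun h => x.2.2 (congrArg Subtype.val h)⟩) ?_
    fun _ _ hxy => Adj.reachable (by simpa using hxy)⟩
  rintro ⟨⟨x, hx⟩, hxv⟩
  exact ⟨⟨x, hx, fun h => hxv (Subtype.ext h)⟩, rfl⟩

end TwoConnected

section Contraction

variable {V : Type*} {X : SimpleGraph V}

lemma contractEdges_adj_mk {F : Set (Sym2 V)} {u v : V} (h : X.Adj u v)
    (hne : (fromEdgeSet F).connectedComponentMk u ≠ (fromEdgeSet F).connectedComponentMk v) :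
    (contractEdges X F).Adj ((fromEdgeSet F).connectedComponentMk u)
      ((fromEdgeSet F).connectedComponentMk v) :=
  (fromRel_adj _ _ _).mpr ⟨hne, Or.inl ⟨u, v, h, rfl, rfl⟩⟩

lemma exists_adj_of_contractEdges_adj {F : Set (Sym2 V)}
    {c d : (fromEdgeSet F).ConnectedComponent} (h : (contractEdges X F).Adj c d) :
    ∃ u v, X.Adj u v ∧ (fromEdgeSet F).connectedComponentMk u = c ∧
      (fromEdgeSet F).connectedComponentMk v = d := by
  obtain ⟨-, ⟨u, v, huv, rfl, rfl⟩ | ⟨u, v, huv, rfl, rfl⟩⟩ := (fromRel_adj _ _ _).mp h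
  · exact ⟨u, v, huv, rfl, rfl⟩
  · exact ⟨v, u, huv.symm, rfl, rfl⟩

lemma connectedComponentMk_eq_or_contractEdges_adj {F : Set (Sym2 V)} {u v : V}
    (h : X.Adj u v) :
    (fromEdgeSet F).connectedComponentMk u = (fromEdgeSet F).connectedComponentMk v ∨
      (contractEdges X F).Adj ((fromEdgeSet F).connectedComponentMk u)
        ((fromEdgeSet F).connectedComponentMk v) :=
  or_iff_not_imp_left.mpr (contractEdges_adj_mk h)

lemma connected_contractEdges (hX : X.Connected) (F : Set (Sym2 V)) :
    (contractEdges X F).Connected :=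
  hX.of_surjective (fromEdgeSet F).connectedComponentMk (fun c => c.exists_rep)
    fun _ _ h => (connectedComponentMk_eq_or_contractEdges_adj h).elim (fun h => h ▸ .rfl)
      Adj.reachable

lemma connected_contractEdges_induce_ne {F : Set (Sym2 V)}
    (c : (fromEdgeSet F).ConnectedComponent)
    (h : (X.induce {u | (fromEdgeSet F).connectedComponentMk u ≠ c}).Connected) :
    ((contractEdges X F).induce {d | d ≠ c}).Connected :=
  h.induce_of_surjOn (f := (fromEdgeSet F).connectedComponentMk) (fun _ hu => hu)
    (fun d hd => by obtain ⟨u, rfl⟩ := d.exists_rep; exact ⟨u, hd, rfl⟩)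
    fun _ _ _ _ => connectedComponentMk_eq_or_contractEdges_adj

variable {S : Set V}

lemma eq_of_connectedComponentMk_edgesIn_eq {x y : V} (hx : x ∉ S)
    (h : (fromEdgeSet (edgesIn X S)).connectedComponentMk x =
      (fromEdgeSet (edgesIn X S)).connectedComponentMk y) : x = y := by
  obtain ⟨_ | ⟨hxz, _⟩⟩ := ConnectedComponent.exact h
  · rfl
  · exact absurd (((fromEdgeSet_adj _).mp hxz).1.2 x (Sym2.mem_mk_left _ _)) hx

lemma connectedComponentMk_edgesIn_eq (hS : (X.induce S).Preconnected) {x y : V}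
    (hx : x ∈ S) (hy : y ∈ S) :
    (fromEdgeSet (edgesIn X S)).connectedComponentMk x =
      (fromEdgeSet (edgesIn X S)).connectedComponentMk y := by
  refine ConnectedComponent.sound (Reachable.of_map Subtype.val ?_ (hS ⟨x, hx⟩ ⟨y, hy⟩))
  intro p q hpq
  refine Adj.reachable ((fromEdgeSet_adj _).mpr ⟨⟨hpq, ?_⟩, fun h => hpq.ne (Subtype.ext h)⟩)
  rintro v hv
  rcases Sym2.mem_iff.mp hv with rfl | rfl
  exacts [p.2, q.2]

-- Contracting `E(S)` merges `S` into one vertex and keeps the other vertices apart: deleting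
-- the merged vertex leaves `X[Sᶜ]`, deleting any other vertex `w` leaves a contraction of `X - w`.
lemma isTwoConnected_contractEdges_iff (hX : IsTwoConnected X) (hS : (X.induce S).Connected) :
    IsTwoConnected (contractEdges X (edgesIn X S)) ↔ (X.induce Sᶜ).Connected := by
  set mk := (fromEdgeSet (edgesIn X S)).connectedComponentMk
  obtain ⟨s₀, hs₀⟩ := hS.nonempty.some
  have hmk : ∀ u, mk u = mk s₀ ↔ u ∈ S := fun u =>
    ⟨fun h => by_contra fun hu => hu (eq_of_connectedComponentMk_edgesIn_eq hu h ▸ hs₀),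
      fun hu => connectedComponentMk_edgesIn_eq hS.preconnected hu hs₀⟩
  have hout : ∀ c u, u ∉ S → mk u = c → Quot.out c = u := fun c u hu h =>
    (eq_of_connectedComponentMk_edgesIn_eq hu (h.trans (Quot.out_eq c).symm)).symm
  constructor
  · intro h
    refine Connected.induce_of_surjOn (s := {d | d ≠ mk s₀}) (f := Quot.out)
      (fun c hc hcS => hc ?_) (fun u hu => ⟨mk u, fun h => hu ((hmk u).mp h), hout _ u hu rfl⟩)
      ?_ (h.2 (mk s₀))
    · exact (Quot.out_eq c).symm.trans ((hmk _).mpr hcS)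
    intro c d hc hd hcd
    obtain ⟨u, v, huv, rfl, rfl⟩ := exists_adj_of_contractEdges_adj hcd
    have hu : u ∉ S := fun h => hc ((hmk u).mpr h)
    have hv : v ∉ S := fun h => hd ((hmk v).mpr h)
    rw [hout _ u hu rfl, hout _ v hv rfl]
    exact Or.inr huv
  · refine fun hSc => ⟨connected_contractEdges hX.1 _, ConnectedComponent.ind fun w => ?_⟩
    apply connected_contractEdges_induce_ne
    by_cases hw : w ∈ S
    · have hSc' : {u | mk u ≠ mk w} = Sᶜ :=
        ext fun u => by rw [(hmk w).mpr hw]; exact not_congr (hmk u)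
      rwa [hSc']
    · refine hX.connected_induce fun x hx y hy => ?_
      exact (eq_of_connectedComponentMk_edgesIn_eq hw (not_not.mp hx).symm).symm.trans
        (eq_of_connectedComponentMk_edgesIn_eq hw (not_not.mp hy).symm)

lemma isGoodFlat_iff (hX : IsTwoConnected X) :
    IsGoodFlat X S ↔ IsTwoConnected (X.induce S) ∧ (X.induce Sᶜ).Connected :=
  and_congr_right fun h => isTwoConnected_contractEdges_iff hX h.1

end Contraction

section EdgesIn

variable {V : Type*} {X : SimpleGraph V}

lemma mem_edgesIn {S : Set V} {x y : V} : s(x, y) ∈ edgesIn X S ↔ X.Adj x y ∧ x ∈ S ∧ y ∈ S := by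
  simp [edgesIn]

lemma edgesIn_univ : edgesIn X univ = X.edgeSet := by
  simp [edgesIn]

lemma edgesIn_eq_empty_of_subsingleton {S : Set V} (hS : S.Subsingleton) :
    edgesIn X S = ∅ := by
  refine eq_empty_of_forall_notMem fun e he => ?_
  induction e using Sym2.ind with | _ x y => ?_
  obtain ⟨hxy, hx, hy⟩ := mem_edgesIn.mp he
  exact hxy.ne (hS hx hy)

end EdgesIn

lemma Spade2.three_le_card {V : Type*} [Finite V] {X : SimpleGraph V} (h : Spade2 X) :
    3 ≤ Nat.card V := by
  classical
  have := Fintype.ofFinite V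
  obtain ⟨⟨hconn, hdel⟩, hE, -⟩ := h
  obtain ⟨v⟩ := hconn.nonempty
  obtain ⟨⟨u, hu⟩⟩ := (hdel v).nonempty
  have h2 : 2 ≤ Nat.card V := Finite.one_lt_card_iff_nontrivial.mpr ⟨u, v, hu⟩
  have hle := X.card_edgeFinset_le_card_choose_two
  rw [← coe_edgeFinset, ncard_coe_finset] at hE
  rw [hE, ← Nat.card_eq_fintype_card] at hle
  by_contra! h3
  rw [show Nat.card V = 2 by omega] at hle
  simp at hle

lemma Spade2.exists_ne_ne {V : Type*} [Finite V] {X : SimpleGraph V} (h : Spade2 X) (x y : V) :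
    ∃ z, z ≠ x ∧ z ≠ y := by
  by_contra! hxy
  have hsub : (univ : Set V) ⊆ {x, y} := fun z _ => or_iff_not_imp_left.mpr (hxy z)
  have := (ncard_le_ncard hsub).trans (ncard_insert_le x {y})
  rw [ncard_univ, ncard_singleton] at this
  have := h.three_le_card
  omega

lemma exists_adj_of_map_eq {V W : Type*} {X : SimpleGraph V} {φ : V → W} {e : Sym2 V} {a b : W}
    (he : e ∈ X.edgeSet) (h : Sym2.map φ e = s(a, b)) :
    ∃ u v, X.Adj u v ∧ e = s(u, v) ∧ φ u = a ∧ φ v = b := by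
  induction e using Sym2.ind with | _ x y => ?_
  rcases Sym2.eq_iff.mp ((Sym2.map_mk φ x y).symm.trans h) with ⟨hx, hy⟩ | ⟨hx, hy⟩
  exacts [⟨x, y, he, rfl, hx, hy⟩, ⟨y, x, X.adj_symm he, Sym2.eq_swap, hy, hx⟩]

structure CollisionData {V₁ V₂ W : Type*} (G₁ : SimpleGraph V₁) (G₂ : SimpleGraph V₂)
    (G : SimpleGraph W) (a b : W) where
  φ₁ : V₁ → W
  φ₂ : V₂ → W
  injective₁ : Function.Injective φ₁
  injective₂ : Function.Injective φ₂
  u₁ : V₁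
  v₁ : V₁
  u₂ : V₂
  v₂ : V₂
  adj₁ : G₁.Adj u₁ v₁
  adj₂ : G₂.Adj u₂ v₂
  φ₁_u₁ : φ₁ u₁ = a
  φ₁_v₁ : φ₁ v₁ = b
  φ₂_u₂ : φ₂ u₂ = a
  φ₂_v₂ : φ₂ v₂ = b
  range_union : range φ₁ ∪ range φ₂ = univ
  range_inter : range φ₁ ∩ range φ₂ = {a, b}
  adj_iff : ∀ x y, G.Adj x y ↔
    (∃ p q, G₁.Adj p q ∧ s(p, q) ≠ s(u₁, v₁) ∧ φ₁ p = x ∧ φ₁ q = y) ∨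
    (∃ p q, G₂.Adj p q ∧ s(p, q) ≠ s(u₂, v₂) ∧ φ₂ p = x ∧ φ₂ q = y)

section Collision

variable {V₁ V₂ W : Type*} {G₁ : SimpleGraph V₁} {G₂ : SimpleGraph V₂} {G : SimpleGraph W}
  {a b : W}

lemma IsCollision.nonempty_collisionData {e₁ : Sym2 V₁} {e₂ : Sym2 V₂}
    (hc : IsCollision G₁ G₂ e₁ e₂ G a b) (he₁ : e₁ ∈ G₁.edgeSet) (he₂ : e₂ ∈ G₂.edgeSet) :
    Nonempty (CollisionData G₁ G₂ G a b) := by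
  obtain ⟨-, -, φ₁, φ₂, inj₁, inj₂, hm₁, hm₂, cover, inter, adj_iff⟩ := hc
  obtain ⟨u₁, v₁, h₁, rfl, hu₁, hv₁⟩ := exists_adj_of_map_eq he₁ hm₁
  obtain ⟨u₂, v₂, h₂, rfl, hu₂, hv₂⟩ := exists_adj_of_map_eq he₂ hm₂
  exact ⟨⟨φ₁, φ₂, inj₁, inj₂, u₁, v₁, u₂, v₂, h₁, h₂, hu₁, hv₁, hu₂, hv₂,
    eq_univ_of_forall cover, inter, adj_iff⟩⟩

namespace CollisionData

variable (D : CollisionData G₁ G₂ G a b)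

def swap : CollisionData G₂ G₁ G a b where
  φ₁ := D.φ₂
  φ₂ := D.φ₁
  injective₁ := D.injective₂
  injective₂ := D.injective₁
  u₁ := D.u₂
  v₁ := D.v₂
  u₂ := D.u₁
  v₂ := D.v₁
  adj₁ := D.adj₂
  adj₂ := D.adj₁
  φ₁_u₁ := D.φ₂_u₂
  φ₁_v₁ := D.φ₂_v₂
  φ₂_u₂ := D.φ₁_u₁
  φ₂_v₂ := D.φ₁_v₁
  range_union := union_comm (range D.φ₁) _ ▸ D.range_union
  range_inter := inter_comm (range D.φ₁) _ ▸ D.range_inter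
  adj_iff x y := (D.adj_iff x y).trans or_comm

lemma ne (D : CollisionData G₁ G₂ G a b) : a ≠ b := by
  have h := D.injective₁.ne D.adj₁.ne
  rwa [D.φ₁_u₁, D.φ₁_v₁] at h

lemma a_mem_range₁ : a ∈ range D.φ₁ := ⟨D.u₁, D.φ₁_u₁⟩

lemma b_mem_range₁ : b ∈ range D.φ₁ := ⟨D.v₁, D.φ₁_v₁⟩

lemma a_mem_range₂ : a ∈ range D.φ₂ := ⟨D.u₂, D.φ₂_u₂⟩

lemma b_mem_range₂ : b ∈ range D.φ₂ := ⟨D.v₂, D.φ₂_v₂⟩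

lemma mem_range_or_mem_range (x : W) : x ∈ range D.φ₁ ∨ x ∈ range D.φ₂ := by
  rw [← mem_union, D.range_union]
  trivial

lemma eq_or_eq_of_mem_range {x : W} (h₁ : x ∈ range D.φ₁) (h₂ : x ∈ range D.φ₂) :
    x = a ∨ x = b := by
  have h : x ∈ range D.φ₁ ∩ range D.φ₂ := ⟨h₁, h₂⟩
  simpa [D.range_inter] using h

lemma adj_of_adj₁ {p q : V₁} (h : G₁.Adj p q) (hne : s(p, q) ≠ s(D.u₁, D.v₁)) :
    G.Adj (D.φ₁ p) (D.φ₁ q) :=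
  (D.adj_iff _ _).mpr (Or.inl ⟨p, q, h, hne, rfl, rfl⟩)

lemma sup_edge_adj_of_adj₁ {p q : V₁} (h : G₁.Adj p q) :
    (G ⊔ edge a b).Adj (D.φ₁ p) (D.φ₁ q) := by
  by_cases hne : s(p, q) = s(D.u₁, D.v₁)
  · right
    refine (edge_adj ..).mpr ⟨?_, D.injective₁.ne h.ne⟩
    rcases Sym2.eq_iff.mp hne with ⟨rfl, rfl⟩ | ⟨rfl, rfl⟩ <;> simp [D.φ₁_u₁, D.φ₁_v₁]
  · exact Or.inl (D.adj_of_adj₁ h hne)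

lemma mem_range_of_adj {x y : W} (h : G.Adj x y) :
    (x ∈ range D.φ₁ ∧ y ∈ range D.φ₁) ∨ (x ∈ range D.φ₂ ∧ y ∈ range D.φ₂) := by
  rcases (D.adj_iff x y).mp h with ⟨p, q, -, -, rfl, rfl⟩ | ⟨p, q, -, -, rfl, rfl⟩
  exacts [Or.inl ⟨⟨p, rfl⟩, ⟨q, rfl⟩⟩, Or.inr ⟨⟨p, rfl⟩, ⟨q, rfl⟩⟩]

lemma subset_range_or_subset_range {T : Set W} (hT : (G.induce T).Preconnected) (ha : a ∉ T)
    (hb : b ∉ T) : T ⊆ range D.φ₁ ∨ T ⊆ range D.φ₂ := by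
  by_contra! h
  obtain ⟨x, hxT, hx⟩ := not_subset.mp h.1
  obtain ⟨y, hyT, hy⟩ := not_subset.mp h.2
  -- as `a, b ∉ T`, no edge of `G[T]` joins `range φ₁` to its complement
  have hxy := Reachable.apply_eq (fun w : T => (w : W) ∈ range D.φ₁) ?_ (hT ⟨x, hxT⟩ ⟨y, hyT⟩)
  · exact hx (hxy ▸ (D.mem_range_or_mem_range y).resolve_right hy)
  have hside : ∀ w ∈ T, w ∈ range D.φ₂ → w ∉ range D.φ₁ := fun w hw hw₂ hw₁ =>
    (D.eq_or_eq_of_mem_range hw₁ hw₂).elim (fun h => ha (h ▸ hw)) fun h => hb (h ▸ hw)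
  rintro ⟨p, hp⟩ ⟨q, hq⟩ hpq
  refine propext ?_
  rcases D.mem_range_of_adj hpq with ⟨hp₁, hq₁⟩ | ⟨hp₂, hq₂⟩
  · exact iff_of_true hp₁ hq₁
  · exact iff_of_false (hside p hp hp₂) (hside q hq hq₂)

lemma connected_induce_image {A : Set V₁} (h : (G₁.induce A).Connected) :
    ((G ⊔ edge a b).induce (D.φ₁ '' A)).Connected :=
  h.induce_of_surjOn (mapsTo_image _ _) (surjOn_image _ _) fun _ _ _ _ hpq =>
    Or.inr (D.sup_edge_adj_of_adj₁ hpq)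

lemma connected_induce_sup_edge {T : Set W} (h₁ : (G₁.induce (D.φ₁ ⁻¹' T)).Connected)
    (h₂ : (G₂.induce (D.φ₂ ⁻¹' T)).Connected) (hab : a ∈ T ∨ b ∈ T) :
    ((G ⊔ edge a b).induce T).Connected := by
  have hT : T = D.φ₁ '' (D.φ₁ ⁻¹' T) ∪ D.φ₂ '' (D.φ₂ ⁻¹' T) := by
    rw [image_preimage_eq_inter_range, image_preimage_eq_inter_range,
      ← inter_union_distrib_left, D.range_union, inter_univ]
  rw [hT]
  refine induce_union_connected (D.connected_induce_image h₁).preconnected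
    (D.swap.connected_induce_image h₂).preconnected ?_
  rw [image_preimage_eq_inter_range, image_preimage_eq_inter_range]
  rcases hab with h | h
  · exact ⟨a, ⟨h, D.a_mem_range₁⟩, ⟨h, D.a_mem_range₂⟩⟩
  · exact ⟨b, ⟨h, D.b_mem_range₁⟩, ⟨h, D.b_mem_range₂⟩⟩

lemma connected_induce_range_diff (h₁ : IsTwoConnected G₁) {z : V₁}
    (hz : z = D.u₁ ∨ z = D.v₁) : (G.induce (range D.φ₁ \ {D.φ₁ z})).Connected := by
  refine (h₁.2 z).induce_of_surjOn (f := D.φ₁) (fun x hx => ⟨⟨x, rfl⟩, D.injective₁.ne hx⟩)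
    (fun _ ⟨⟨x, hx⟩, hxz⟩ => ⟨x, fun h => hxz (hx ▸ h ▸ rfl), hx⟩)
    fun p q hp hq hpq => Or.inr (D.adj_of_adj₁ hpq ?_)
  rintro h
  rcases Sym2.eq_iff.mp h with ⟨rfl, rfl⟩ | ⟨rfl, rfl⟩ <;> rcases hz with rfl | rfl
  exacts [hp rfl, hq rfl, hq rfl, hp rfl]

lemma connected_induce_range (h₁ : IsTwoConnected G₁) (hw : ∃ w, w ≠ D.u₁ ∧ w ≠ D.v₁) :
    (G.induce (range D.φ₁)).Connected := by
  obtain ⟨w, hwu, hwv⟩ := hw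
  have hR : range D.φ₁ = (range D.φ₁ \ {D.φ₁ D.u₁}) ∪ (range D.φ₁ \ {D.φ₁ D.v₁}) := by
    have huv : D.φ₁ D.u₁ ∉ ({D.φ₁ D.v₁} : Set W) := D.injective₁.ne D.adj₁.ne
    rw [← sdiff_inter, singleton_inter_eq_empty.mpr huv, sdiff_empty]
  rw [hR]
  exact induce_union_connected (D.connected_induce_range_diff h₁ (.inl rfl)).preconnected
    (D.connected_induce_range_diff h₁ (.inr rfl)).preconnected
    ⟨D.φ₁ w, ⟨⟨w, rfl⟩, D.injective₁.ne hwu⟩, ⟨⟨w, rfl⟩, D.injective₁.ne hwv⟩⟩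

lemma reachable_of_range_subset (h₁ : IsTwoConnected G₁) (hw : ∃ w, w ≠ D.u₁ ∧ w ≠ D.v₁)
    {T : Set W} (hT : range D.φ₁ ⊆ T) (ha : a ∈ T) (hb : b ∈ T) :
    (G.induce T).Reachable ⟨a, ha⟩ ⟨b, hb⟩ :=
  ((D.connected_induce_range h₁ hw).preconnected ⟨a, D.a_mem_range₁⟩ ⟨b, D.b_mem_range₁⟩).map
    (induceHomOfLE G hT).toHom

section Connectivity

variable (h₁ : IsTwoConnected G₁) (h₂ : IsTwoConnected G₂) (hw₁ : ∃ w, w ≠ D.u₁ ∧ w ≠ D.v₁)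
  (hw₂ : ∃ w, w ≠ D.u₂ ∧ w ≠ D.v₂)
include h₁ h₂ hw₁ hw₂

lemma connected_induce {T : Set W} (hT₁ : (D.φ₁ ⁻¹' T)ᶜ.Subsingleton)
    (hT₂ : (D.φ₂ ⁻¹' T)ᶜ.Subsingleton) (hab : a ∈ T ∨ b ∈ T)
    (hR : a ∈ T → b ∈ T → range D.φ₁ ⊆ T ∨ range D.φ₂ ⊆ T) : (G.induce T).Connected :=
  (D.connected_induce_sup_edge (h₁.connected_induce hT₁) (h₂.connected_induce hT₂)
    hab).induce_of_sup_edge fun ha hb => (hR ha hb).elim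
      (D.reachable_of_range_subset h₁ hw₁ · ha hb) (D.swap.reachable_of_range_subset h₂ hw₂ · ha hb)

lemma isTwoConnected : IsTwoConnected G := by
  refine ⟨(induceUnivIso G).connected_iff.mp (D.connected_induce h₁ h₂ hw₁ hw₂ (by simp) (by simp)
    (.inl trivial) fun _ _ => .inl (subset_univ _)), fun v => ?_⟩
  refine D.connected_induce h₁ h₂ hw₁ hw₂ (T := {v}ᶜ) ?_ ?_ ?_ fun ha hb => ?_
  · rw [preimage_compl, compl_compl]
    exact subsingleton_singleton.preimage D.injective₁
  · rw [preimage_compl, compl_compl]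
    exact subsingleton_singleton.preimage D.injective₂
  · by_contra! h
    exact D.ne ((not_not.mp h.1).trans (not_not.mp h.2).symm)
  · have hv : v ∉ range D.φ₁ ∨ v ∉ range D.φ₂ := by
      by_contra! h
      rcases D.eq_or_eq_of_mem_range h.1 h.2 with rfl | rfl
      exacts [ha rfl, hb rfl]
    exact hv.elim (fun hv => .inl fun x hx hxv => hv (hxv ▸ hx))
      fun hv => .inr fun x hx hxv => hv (hxv ▸ hx)

end Connectivity

noncomputable def retraction (t : V₁) : W → V₁ :=
  Function.extend D.φ₁ id fun _ => t

lemma retraction_φ₁ (t x : V₁) : D.retraction t (D.φ₁ x) = x :=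
  D.injective₁.extend_apply _ _ x

lemma φ₁_retraction (t : V₁) {w : W} (hw : w ∈ range D.φ₁) : D.φ₁ (D.retraction t w) = w := by
  obtain ⟨x, rfl⟩ := hw
  rw [retraction_φ₁]

lemma retraction_of_notMem (t : V₁) {w : W} (hw : w ∉ range D.φ₁) : D.retraction t w = t :=
  Function.extend_apply' _ _ _ hw

lemma retraction_eq_or_eq {t : V₁} (ht : t = D.u₁ ∨ t = D.v₁) {w : W}
    (hw : w ∈ range D.φ₂) : D.retraction t w = D.u₁ ∨ D.retraction t w = D.v₁ := by
  by_cases hw₁ : w ∈ range D.φ₁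
  · rcases D.eq_or_eq_of_mem_range hw₁ hw with rfl | rfl
    · exact .inl ((congrArg _ D.φ₁_u₁).symm.trans (D.retraction_φ₁ t D.u₁))
    · exact .inr ((congrArg _ D.φ₁_v₁).symm.trans (D.retraction_φ₁ t D.v₁))
  · rwa [D.retraction_of_notMem t hw₁]

lemma retraction_adj {t : V₁} (ht : t = D.u₁ ∨ t = D.v₁) {w w' : W} (h : G.Adj w w') :
    D.retraction t w = D.retraction t w' ∨ G₁.Adj (D.retraction t w) (D.retraction t w') := by
  rcases (D.adj_iff w w').mp h with ⟨p, q, hpq, -, rfl, rfl⟩ | ⟨p, q, -, -, rfl, rfl⟩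
  · rw [retraction_φ₁, retraction_φ₁]
    exact .inr hpq
  · rcases D.retraction_eq_or_eq ht ⟨p, rfl⟩ with hp | hp <;>
      rcases D.retraction_eq_or_eq ht ⟨q, rfl⟩ with hq | hq <;> rw [hp, hq]
    exacts [.inl rfl, .inr D.adj₁, .inr D.adj₁.symm, .inl rfl]

lemma connected_induce_preimage {T : Set W} (hT : T ⊆ range D.φ₁ ∨ a ∈ T ∨ b ∈ T)
    (h : (G.induce T).Connected) : (G₁.induce (D.φ₁ ⁻¹' T)).Connected := by
  obtain ⟨t, ht, htT⟩ : ∃ t, (t = D.u₁ ∨ t = D.v₁) ∧ (T ⊆ range D.φ₁ ∨ D.φ₁ t ∈ T) := by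
    rcases hT with hT | hT | hT
    exacts [⟨_, .inl rfl, .inl hT⟩, ⟨_, .inl rfl, .inr (by rwa [D.φ₁_u₁])⟩,
      ⟨_, .inr rfl, .inr (by rwa [D.φ₁_v₁])⟩]
  refine h.induce_of_surjOn (f := D.retraction t) (fun w hw => ?_)
    (fun x hx => ⟨D.φ₁ x, hx, D.retraction_φ₁ t x⟩) fun _ _ _ _ => D.retraction_adj ht
  by_cases hw₁ : w ∈ range D.φ₁
  · rwa [mem_preimage, D.φ₁_retraction t hw₁]
  · rw [mem_preimage, D.retraction_of_notMem t hw₁]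
    exact htT.resolve_left fun hT => hw₁ (hT hw)

lemma isGoodFlat_preimage (hG : IsTwoConnected G) (h₁ : IsTwoConnected G₁) {S : Set W}
    (hS : IsGoodFlat G S) (hside : S ⊆ range D.φ₁ ∧ ¬(a ∈ S ∧ b ∈ S) ∨ range D.φ₂ ⊆ S) :
    IsGoodFlat G₁ (D.φ₁ ⁻¹' S) := by
  rw [isGoodFlat_iff hG] at hS
  rw [isGoodFlat_iff h₁, ← preimage_compl]
  refine ⟨isTwoConnected_induce (D.connected_induce_preimage ?_ hS.1.1) fun v _ => ?_,
    D.connected_induce_preimage ?_ hS.2⟩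
  · exact hside.imp And.left fun h => .inl (h D.a_mem_range₂)
  · rw [← D.injective₁.preimage_image {v}, image_singleton, ← preimage_sdiff]
    refine D.connected_induce_preimage ?_ (hS.1.connected_induce_of_subset sdiff_subset ?_)
    · refine hside.imp (fun h => sdiff_subset.trans h.1) fun h => ?_
      by_cases hva : D.φ₁ v = a
      · exact .inr ⟨h D.b_mem_range₂, fun hvb => D.ne (hva.symm.trans hvb.symm)⟩
      · exact .inl ⟨h D.a_mem_range₂, Ne.symm hva⟩
    · rw [Set.sdiff_sdiff_right_self]
      exact subsingleton_singleton.anti inter_subset_right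
  · rcases hside with ⟨-, hab⟩ | h
    · exact .inr (not_and_or.mp hab)
    · exact .inl fun w hw => (D.mem_range_or_mem_range w).resolve_right fun h' => hw (h h')

lemma subset_range_of_sdiff_subset {S : Set W} (h : S \ {a, b} ⊆ range D.φ₁) :
    S ⊆ range D.φ₁ :=
  (sdiff_subset_iff.mp h).trans
    (union_subset (insert_subset D.a_mem_range₁ (singleton_subset_iff.mpr D.b_mem_range₁))
      subset_rfl)

lemma subset_range_or_range_subset_of_isGoodFlat (hG : IsTwoConnected G) {S : Set W}
    (hS : IsGoodFlat G S) :
    S ⊆ range D.φ₁ ∧ ¬(a ∈ S ∧ b ∈ S) ∨ S ⊆ range D.φ₂ ∧ ¬(a ∈ S ∧ b ∈ S) ∨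
      range D.φ₁ ⊆ S ∨ range D.φ₂ ⊆ S := by
  rw [isGoodFlat_iff hG] at hS
  by_cases hab : a ∈ S ∧ b ∈ S
  · have hmem : ∀ {x}, x ∈ range D.φ₁ → x ∈ range D.φ₂ → x ∈ S := fun h₁ h₂ =>
      (D.eq_or_eq_of_mem_range h₁ h₂).elim (· ▸ hab.1) (· ▸ hab.2)
    rcases D.subset_range_or_subset_range hS.2.preconnected (· hab.1) (· hab.2) with h | h
    · exact .inr (.inr (.inr fun x hx => by_contra fun hxS => hxS (hmem (h hxS) hx)))
    · exact .inr (.inr (.inl fun x hx => by_contra fun hxS => hxS (hmem hx (h hxS))))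
  have hsub : (S \ (S \ {a, b})).Subsingleton := by
    rw [Set.sdiff_sdiff_right_self]
    rintro x ⟨hxS, hx | hx⟩ y ⟨hyS, hy | hy⟩ <;> subst x y
    exacts [rfl, absurd ⟨hxS, hyS⟩ hab, absurd ⟨hyS, hxS⟩ hab, rfl]
  have hT := hS.1.connected_induce_of_subset sdiff_subset hsub
  rcases D.subset_range_or_subset_range hT.preconnected (fun h => h.2 (.inl rfl))
    (fun h => h.2 (.inr rfl)) with h | h
  · exact .inl ⟨D.subset_range_of_sdiff_subset h, hab⟩
  · exact .inr (.inl ⟨D.swap.subset_range_of_sdiff_subset h, hab⟩)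

lemma image_edgesIn_subset (S : Set W) :
    Sym2.map D.φ₁ '' (edgesIn G₁ (D.φ₁ ⁻¹' S) \ {s(D.u₁, D.v₁)}) ⊆ edgesIn G S := by
  rintro _ ⟨e, ⟨he, hne⟩, rfl⟩
  induction e using Sym2.ind with | _ p q => ?_
  obtain ⟨hpq, hp, hq⟩ := mem_edgesIn.mp he
  exact mem_edgesIn.mpr ⟨D.adj_of_adj₁ hpq hne, hp, hq⟩

lemma edgesIn_eq (S : Set W) :
    edgesIn G S = Sym2.map D.φ₁ '' (edgesIn G₁ (D.φ₁ ⁻¹' S) \ {s(D.u₁, D.v₁)}) ∪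
      Sym2.map D.φ₂ '' (edgesIn G₂ (D.φ₂ ⁻¹' S) \ {s(D.u₂, D.v₂)}) := by
  refine Subset.antisymm (fun e he => ?_)
    (union_subset (D.image_edgesIn_subset S) (D.swap.image_edgesIn_subset S))
  induction e using Sym2.ind with | _ x y => ?_
  obtain ⟨hxy, hx, hy⟩ := mem_edgesIn.mp he
  rcases (D.adj_iff x y).mp hxy with ⟨p, q, hpq, hne, rfl, rfl⟩ | ⟨p, q, hpq, hne, rfl, rfl⟩
  · exact .inl ⟨s(p, q), ⟨mem_edgesIn.mpr ⟨hpq, hx, hy⟩, hne⟩, rfl⟩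
  · exact .inr ⟨s(p, q), ⟨mem_edgesIn.mpr ⟨hpq, hx, hy⟩, hne⟩, rfl⟩

lemma disjoint_image_edgeSet :
    Disjoint (Sym2.map D.φ₁ '' (G₁.edgeSet \ {s(D.u₁, D.v₁)})) (Sym2.map D.φ₂ '' G₂.edgeSet) := by
  rw [Set.disjoint_left]
  rintro _ ⟨e, ⟨he, hne⟩, rfl⟩ ⟨e', -, he'⟩
  induction e using Sym2.ind with | _ p q => ?_
  have hab : ∀ x ∈ s(p, q), D.φ₁ x = a ∨ D.φ₁ x = b := fun x hx => by
    have hx' : D.φ₁ x ∈ Sym2.map D.φ₂ e' := by rw [he']; exact Sym2.mem_map.mpr ⟨x, hx, rfl⟩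
    obtain ⟨y, -, hy⟩ := Sym2.mem_map.mp hx'
    exact D.eq_or_eq_of_mem_range ⟨x, rfl⟩ ⟨y, hy⟩
  have hpq : p ≠ q := G₁.ne_of_adj he
  apply hne
  rcases hab p (Sym2.mem_mk_left p q) with hp | hp <;>
    rcases hab q (Sym2.mem_mk_right p q) with hq | hq
  · exact absurd (D.injective₁ (hp.trans hq.symm)) hpq
  · rw [D.injective₁ (hp.trans D.φ₁_u₁.symm), D.injective₁ (hq.trans D.φ₁_v₁.symm)]
    rfl
  · rw [D.injective₁ (hp.trans D.φ₁_v₁.symm), D.injective₁ (hq.trans D.φ₁_u₁.symm),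
      Sym2.eq_swap]
    rfl
  · exact absurd (D.injective₁ (hp.trans hq.symm)) hpq

variable [Finite W]

lemma ncard_edgesIn (S : Set W) :
    (edgesIn G S).ncard = (edgesIn G₁ (D.φ₁ ⁻¹' S) \ {s(D.u₁, D.v₁)}).ncard +
      (edgesIn G₂ (D.φ₂ ⁻¹' S) \ {s(D.u₂, D.v₂)}).ncard := by
  rw [D.edgesIn_eq, ncard_union_eq, ncard_image_of_injective _ (Sym2.map.injective D.injective₁),
    ncard_image_of_injective _ (Sym2.map.injective D.injective₂)]
  exact D.disjoint_image_edgeSet.mono (image_mono (sdiff_subset_sdiff_left fun _ h => h.1))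
    (image_mono (sdiff_subset.trans fun _ h => h.1))

lemma ncard_add_ncard_inter (S : Set W) :
    S.ncard + (S ∩ {a, b}).ncard = (D.φ₁ ⁻¹' S).ncard + (D.φ₂ ⁻¹' S).ncard := by
  rw [← ncard_image_of_injective _ D.injective₁, ← ncard_image_of_injective _ D.injective₂,
    image_preimage_eq_inter_range, image_preimage_eq_inter_range,
    ← ncard_union_add_ncard_inter (S ∩ range D.φ₁), ← inter_union_distrib_left, D.range_union,
    inter_univ, ← inter_inter_distrib_left, D.range_inter]

lemma ncard_edgeSet [Finite V₁] [Finite V₂] (D : CollisionData G₁ G₂ G a b)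
    (h₁ : G₁.edgeSet.ncard = 2 * (Nat.card V₁ - 1))
    (h₂ : G₂.edgeSet.ncard = 2 * (Nat.card V₂ - 1)) :
    G.edgeSet.ncard = 2 * (Nat.card W - 1) := by
  have hE := D.ncard_edgesIn univ
  have hV := D.ncard_add_ncard_inter univ
  have he₁ := ncard_sdiff_singleton_add_one (G₁.mem_edgeSet.mpr D.adj₁)
  have he₂ := ncard_sdiff_singleton_add_one (G₂.mem_edgeSet.mpr D.adj₂)
  rw [preimage_univ, preimage_univ, edgesIn_univ, edgesIn_univ, edgesIn_univ] at hE
  rw [univ_inter, ncard_pair D.ne, preimage_univ, preimage_univ, ncard_univ, ncard_univ,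
    ncard_univ] at hV
  omega

lemma ncard_edgesIn_of_subset_range {S : Set W} (hS₁ : S ⊆ range D.φ₁)
    (hab : ¬(a ∈ S ∧ b ∈ S))
    (hflat : (edgesIn G₁ (D.φ₁ ⁻¹' S)).ncard = 2 * (D.φ₁ ⁻¹' S).ncard - 3) :
    (edgesIn G S).ncard = 2 * S.ncard - 3 := by
  have h₂ : (D.φ₂ ⁻¹' S).Subsingleton := fun x hx y hy => by
    refine D.injective₂ ?_
    rcases D.eq_or_eq_of_mem_range (hS₁ hx) ⟨x, rfl⟩ with h | h <;>
      rcases D.eq_or_eq_of_mem_range (hS₁ hy) ⟨y, rfl⟩ with h' | h'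
    · exact h.trans h'.symm
    · exact absurd ⟨h ▸ hx, h' ▸ hy⟩ hab
    · exact absurd ⟨h' ▸ hy, h ▸ hx⟩ hab
    · exact h.trans h'.symm
  have he₁ : s(D.u₁, D.v₁) ∉ edgesIn G₁ (D.φ₁ ⁻¹' S) := fun h => by
    obtain ⟨-, hu, hv⟩ := mem_edgesIn.mp h
    exact hab ⟨D.φ₁_u₁ ▸ hu, D.φ₁_v₁ ▸ hv⟩
  rw [D.ncard_edgesIn, sdiff_singleton_eq_self he₁, edgesIn_eq_empty_of_subsingleton h₂,
    empty_sdiff, ncard_empty, add_zero, hflat, ← ncard_image_of_injective _ D.injective₁,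
    image_preimage_eq_of_subset hS₁]

lemma ncard_edgesIn_of_range_subset [Finite V₁] [Finite V₂] {S : Set W} (hS₂ : range D.φ₂ ⊆ S)
    (hflat : (edgesIn G₁ (D.φ₁ ⁻¹' S)).ncard = 2 * (D.φ₁ ⁻¹' S).ncard - 3)
    (h₂ : G₂.edgeSet.ncard = 2 * (Nat.card V₂ - 1)) :
    (edgesIn G S).ncard = 2 * S.ncard - 3 := by
  have ha := hS₂ D.a_mem_range₂
  have hb := hS₂ D.b_mem_range₂
  have hE := D.ncard_edgesIn S
  have hV := D.ncard_add_ncard_inter S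
  have he₁ := ncard_sdiff_singleton_add_one (s := edgesIn G₁ (D.φ₁ ⁻¹' S))
    (mem_edgesIn.mpr ⟨D.adj₁, by rwa [mem_preimage, D.φ₁_u₁], by rwa [mem_preimage, D.φ₁_v₁]⟩)
  have he₂ := ncard_sdiff_singleton_add_one (G₂.mem_edgeSet.mpr D.adj₂)
  rw [preimage_eq_univ_iff.mpr hS₂, edgesIn_univ] at hE
  rw [inter_eq_right.mpr (insert_subset ha (singleton_subset_iff.mpr hb)), ncard_pair D.ne,
    preimage_eq_univ_iff.mpr hS₂, ncard_univ] at hV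
  omega

lemma spade2 [Finite V₁] [Finite V₂] (D : CollisionData G₁ G₂ G a b)
    (h₁ : Spade2 G₁) (h₂ : Spade2 G₂) : Spade2 G := by
  have hG := D.isTwoConnected h₁.1 h₂.1 (h₁.exists_ne_ne _ _) (h₂.exists_ne_ne _ _)
  refine ⟨hG, D.ncard_edgeSet h₁.2.1 h₂.2.1, fun S hS => ?_⟩
  have hS₁ := D.isGoodFlat_preimage hG h₁.1 hS
  have hS₂ := D.swap.isGoodFlat_preimage hG h₂.1 hS
  rcases D.subset_range_or_range_subset_of_isGoodFlat hG hS with h | h | h | h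
  · exact D.ncard_edgesIn_of_subset_range h.1 h.2 (h₁.2.2 _ (hS₁ (.inl h)))
  · exact D.swap.ncard_edgesIn_of_subset_range h.1 h.2 (h₂.2.2 _ (hS₂ (.inl h)))
  · exact D.swap.ncard_edgesIn_of_range_subset h (h₂.2.2 _ (hS₂ (.inr h))) h₁.2.1
  · exact D.ncard_edgesIn_of_range_subset h (h₁.2.2 _ (hS₁ (.inr h))) h₂.2.1

end CollisionData

end Collision

theorem stmt16_general {V₁ V₂ W : Type*} [Fintype V₁] [Fintype V₂]
    [Fintype W]
    (G₁ : SimpleGraph V₁) (G₂ : SimpleGraph V₂) (h₁ : Spade2 G₁) (h₂ : Spade2 G₂)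
    (e₁ : Sym2 V₁) (e₂ : Sym2 V₂) (he₁ : e₁ ∈ G₁.edgeSet) (he₂ : e₂ ∈ G₂.edgeSet)
    (G : SimpleGraph W) (a b : W) (hc : IsCollision G₁ G₂ e₁ e₂ G a b) :
    Spade2 G := by
  obtain ⟨D⟩ := hc.nonempty_collisionData he₁ he₂
  exact D.spade2 h₁ h₂

theorem stmt16 {V₁ V₂ W : Type*} [Fintype V₁] [DecidableEq V₁] [Fintype V₂] [DecidableEq V₂]
    [Fintype W] [DecidableEq W]
    (G₁ : SimpleGraph V₁) (G₂ : SimpleGraph V₂) (h₁ : Spade2 G₁) (h₂ : Spade2 G₂)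
    (e₁ : Sym2 V₁) (e₂ : Sym2 V₂) (he₁ : e₁ ∈ G₁.edgeSet) (he₂ : e₂ ∈ G₂.edgeSet)
    (G : SimpleGraph W) (a b : W) (hc : IsCollision G₁ G₂ e₁ e₂ G a b) :
    Spade2 G :=
  stmt16_general G₁ G₂ h₁ h₂ e₁ e₂ he₁ he₂ G a b hc

end Gor
end

section
/- Suppose G = (V,E) is a 3-connected finite simple graph satisfying |E| = 2(|V|−1) and |E(S)| = 2|S|−3 for every good flat S ⊆ V. Then G is the complete graph K4. -/
open SimpleGraph
open scoped Pointwise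

namespace Gor

/-!
Deleting a vertex `v` of a 3-connected graph leaves a 2-connected graph, and contracting all of
its edges leaves a single edge joining `v` to the rest; so `V ∖ {v}` is a good flat. The
hypothesis on good flats then reads `|E| - deg v = 2(|V| - 1) - 3`, so every vertex has degree 3,
and the handshake lemma `3|V| = 2|E| = 4(|V| - 1)` gives `|V| = 4`: `G` is `K₄`.
-/

section

variable {V W : Type*} {G : SimpleGraph V}

lemma isTwoConnected_of_adj_of_forall_eq_or_eq {H : SimpleGraph W} {a b : W} (hab : H.Adj a b)
    (hW : ∀ c, c = a ∨ c = b) : IsTwoConnected H := by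
  have : Nonempty W := ⟨a⟩
  refine ⟨⟨fun c d => ?_⟩, fun c => ?_⟩
  · rcases hW c with rfl | rfl <;> rcases hW d with rfl | rfl
    exacts [.rfl, hab.reachable, hab.symm.reachable, .rfl]
  · have : Subsingleton {x | x ≠ c} :=
      ⟨fun x y => Subtype.ext (by grind [hW x, hW y, hW c, hab.ne, x.2, y.2])⟩
    have : Nonempty {x | x ≠ c} := by
      rcases hW c with rfl | rfl
      exacts [⟨⟨b, hab.ne.symm⟩⟩, ⟨⟨a, hab.ne⟩⟩]
    exact .of_subsingleton

lemma reachable_fromEdgeSet_edgesIn {S : Set V} {x y : S} (hxy : (G.induce S).Reachable x y) :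
    (fromEdgeSet (edgesIn G S)).Reachable x y :=
  hxy.map (⟨Subtype.val, fun {a b} hab =>
    ⟨⟨hab, fun z hz => by rcases Sym2.mem_iff.mp hz with rfl | rfl <;> simp⟩,
      G.ne_of_adj hab⟩⟩ : G.induce S →g fromEdgeSet (edgesIn G S))

lemma IsThreeConnected.nonempty_finite (h : IsThreeConnected G) : Nonempty V ∧ Finite V :=
  Nat.card_pos_iff.mp (by have := h.1; omega)

lemma ncard_setOf_ne [Finite V] (v : V) : {x | x ≠ v}.ncard = Nat.card V - 1 := by
  rw [← Set.compl_singleton_eq, Set.ncard_compl, Set.ncard_singleton]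

lemma IsThreeConnected.isTwoConnected_induce_setOf_ne (h : IsThreeConnected G) (v : V) :
    IsTwoConnected (G.induce {x | x ≠ v}) := by
  refine ⟨by convert h.2 v v using 4 <;> simp, fun u => ?_⟩
  let e : G.induce {x | x ≠ v ∧ x ≠ u} ≃g (G.induce {x | x ≠ v}).induce {w | w ≠ u} :=
    { toFun x := ⟨⟨x, x.2.1⟩, fun h => x.2.2 (congrArg Subtype.val h)⟩
      invFun w := ⟨w, w.1.2, fun h => w.2 (Subtype.ext h)⟩
      left_inv _ := rfl
      right_inv _ := rfl
      map_rel_iff' := Iff.rfl }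
  exact e.connected_iff.mp (h.2 v u)

lemma IsThreeConnected.exists_adj (h : IsThreeConnected G) (v : V) : ∃ w, G.Adj v w := by
  have := h.nonempty_finite.2
  have : Nontrivial {x | x ≠ v} := by
    rw [← Finite.one_lt_card_iff_nontrivial, Nat.card_coe_set_eq, ncard_setOf_ne]
    have := h.1
    omega
  obtain ⟨⟨a, hav⟩, ⟨b, hbv⟩, hab⟩ := exists_pair_ne {x | x ≠ v}
  have hreach := ((h.2 a a).preconnected ⟨v, hav.symm, hav.symm⟩
    ⟨b, fun h => hab (Subtype.ext h.symm), fun h => hab (Subtype.ext h.symm)⟩).map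
    (Embedding.induce _).toHom
  exact hreach.nonempty_neighborSet_left hbv.symm

lemma IsThreeConnected.isGoodFlat_setOf_ne (h : IsThreeConnected G) (v : V) :
    IsGoodFlat G {x | x ≠ v} := by
  set K := fromEdgeSet (edgesIn G {x | x ≠ v})
  have hv_isolated : K.neighborSet v = ∅ :=
    Set.eq_empty_of_forall_notMem fun y hy => hy.1.2 v (Sym2.mem_mk_left v y) rfl
  obtain ⟨w, hvw⟩ := h.exists_adj v
  have hwv : w ≠ v := hvw.ne.symm
  have hrest : ∀ x, x ≠ v → K.connectedComponentMk x = K.connectedComponentMk w := fun x hx =>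
    ConnectedComponent.eq.mpr <| reachable_fromEdgeSet_edgesIn
      ((h.isTwoConnected_induce_setOf_ne v).1.preconnected ⟨x, hx⟩ ⟨w, hwv⟩)
  -- the contraction has just two vertices: `v`, isolated in `E(S)`, and the rest of `G`
  refine ⟨h.isTwoConnected_induce_setOf_ne v, isTwoConnected_of_adj_of_forall_eq_or_eq
    (a := K.connectedComponentMk v) (b := K.connectedComponentMk w) ?_ fun c => ?_⟩
  · refine ⟨fun hvw' => ?_, .inl ⟨v, w, hvw, rfl, rfl⟩⟩
    exact not_reachable_of_neighborSet_left_eq_empty hwv.symm hv_isolated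
      (ConnectedComponent.eq.mp hvw')
  · obtain ⟨x, rfl⟩ := c.exists_rep
    by_cases hx : x = v
    · exact .inl (congrArg _ hx)
    · exact .inr (hrest x hx)

lemma edgesIn_setOf_ne (v : V) :
    edgesIn G {x | x ≠ v} = G.edgeSet \ G.incidenceSet v := by
  ext e
  simp only [edgesIn, incidenceSet, Set.mem_ofPred_eq, Set.mem_sdiff]
  grind

lemma ncard_incidenceSet_eq_degree (v : V) [Fintype (G.neighborSet v)] :
    (G.incidenceSet v).ncard = G.degree v := by
  classical
  rw [← Nat.card_coe_set_eq, Nat.card_congr (G.incidenceSetEquivNeighborSet v),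
    Nat.card_eq_fintype_card, card_neighborSet_eq_degree]

lemma IsThreeConnected.isRegularOfDegree_three [Fintype V] [DecidableRel G.Adj]
    (h : IsThreeConnected G) (hE : G.edgeSet.ncard = 2 * (Nat.card V - 1))
    (hS : ∀ S : Set V, IsGoodFlat G S → (edgesIn G S).ncard = 2 * S.ncard - 3) :
    G.IsRegularOfDegree 3 := by
  intro v
  have hflat := hS _ (h.isGoodFlat_setOf_ne v)
  rw [edgesIn_setOf_ne, Set.ncard_sdiff (G.incidenceSet_subset v), ncard_setOf_ne, hE,
    ncard_incidenceSet_eq_degree] at hflat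
  have := Set.ncard_le_ncard (G.incidenceSet_subset v)
  have := h.1
  omega

lemma card_eq_four_of_isRegularOfDegree_three [Fintype V] [Nonempty V] [DecidableRel G.Adj]
    (h : G.IsRegularOfDegree 3) (hE : G.edgeSet.ncard = 2 * (Nat.card V - 1)) :
    Fintype.card V = 4 := by
  have hsum := G.sum_degrees_eq_twice_card_edges
  simp only [h.degree_eq, Finset.sum_const, Finset.card_univ, smul_eq_mul] at hsum
  rw [← coe_edgeFinset, Set.ncard_coe_finset, Nat.card_eq_fintype_card] at hE
  have := Fintype.card_pos (α := V)
  omega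

lemma eq_top_of_isRegularOfDegree_card_sub_one [Fintype V] [DecidableRel G.Adj]
    (h : G.IsRegularOfDegree (Fintype.card V - 1)) : G = ⊤ := by
  ext a b
  exact ⟨G.ne_of_adj, fun hab => (G.degree_eq_card_sub_one a).mp (h.degree_eq a) hab⟩

end

theorem stmt18_general {V : Type*} (G : SimpleGraph V)
    (h3c : IsThreeConnected G)
    (hE : G.edgeSet.ncard = 2 * (Nat.card V - 1))
    (hS : ∀ S : Set V, IsGoodFlat G S → (edgesIn G S).ncard = 2 * S.ncard - 3) :
    Nonempty (G ≃g (⊤ : SimpleGraph (Fin 4))) := by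
  classical
  obtain ⟨_, _⟩ := h3c.nonempty_finite
  have := Fintype.ofFinite V
  have hreg := h3c.isRegularOfDegree_three hE hS
  have hcard := card_eq_four_of_isRegularOfDegree_three hreg hE
  rw [eq_top_of_isRegularOfDegree_card_sub_one (G := G) (by rwa [hcard])]
  exact ⟨Iso.completeGraph (Fintype.equivFinOfCardEq hcard)⟩

theorem stmt18 {V : Type*} [Fintype V] [DecidableEq V] (G : SimpleGraph V)
    (h3c : IsThreeConnected G)
    (hE : G.edgeSet.ncard = 2 * (Nat.card V - 1))
    (hS : ∀ S : Set V, IsGoodFlat G S → (edgesIn G S).ncard = 2 * S.ncard - 3) :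
    Nonempty (G ≃g (⊤ : SimpleGraph (Fin 4))) :=
  stmt18_general G h3c hE hS

end Gor
end
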